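/- arXiv:1010.5752 — 11 statements merged into one kernel-verified Lean document; each statement's English description precedes it below -/
import Mathlib

section
/- Let r : (0,1] → ℝ be defined by r(ε) = 1 if ε = 1/n for some natural number n ≥ 1, and r(ε) = 0 otherwise. Then there is no continuous function s : (0,1] → ℝ such that for every m ∈ ℕ there exists ε₀ > 0 with |r(ε) - s(ε)| < ε^m for all ε < ε₀. -/
open Set Classical

noncomputable section

def Ioc01 : Set ℝ := Set.Ioc 0 1

/-- The indicator net of the reciprocals of the positive integers cannot be approximated
up to a negligible net by any continuous net. -/
theorem stmt0 (r : ℝ → ℝ)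
    (hr : ∀ ε : ℝ, r ε = if ∃ n : ℕ, 1 ≤ n ∧ ε = 1 / (n : ℝ) then 1 else 0) :
    ¬ ∃ s : ℝ → ℝ, ContinuousOn s Ioc01 ∧
      ∀ m : ℕ, ∃ ε₀ > (0:ℝ), ∀ ε ∈ Ioc01, ε < ε₀ → |r ε - s ε| < ε ^ m := by
  rintro ⟨s, hs, happ⟩
  obtain ⟨ε₀, hε₀, h1⟩ := happ 1
  -- choose n ≥ 3 with 1/n < ε₀
  obtain ⟨n, hn⟩ := exists_nat_gt (max 3 (1 / ε₀))
  have hn3 : (3:ℝ) < n := lt_of_le_of_lt (le_max_left _ _) hn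
  have hnpos : (0:ℝ) < n := by linarith
  have hinv_pos : (0:ℝ) < 1 / n := by positivity
  have hinv_lt : 1 / (n:ℝ) < ε₀ := by
    rw [div_lt_iff₀ hnpos]
    have := lt_of_le_of_lt (le_max_right 3 (1/ε₀)) hn
    rw [div_lt_iff₀ hε₀] at this
    linarith [mul_comm ε₀ (n:ℝ)]
  have hmem : (1 / (n:ℝ)) ∈ Ioc01 := by
    constructor
    · exact hinv_pos
    · rw [div_le_one hnpos]; linarith
  -- r (1/n) = 1
  have hr1 : r (1 / (n:ℝ)) = 1 := by
    rw [hr]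
    rw [if_pos]
    refine ⟨n, ?_, rfl⟩
    have : (1:ℝ) ≤ n := by linarith
    exact_mod_cast this
  -- s (1/n) > 1 - 1/n
  have hs1 : 1 - 1/(n:ℝ) < s (1/(n:ℝ)) := by
    have := h1 _ hmem hinv_lt
    rw [hr1, pow_one] at this
    have := abs_lt.mp this
    linarith [this.1, this.2]
  -- continuity at 1/n: get δ
  have hc := hs _ hmem
  rw [Metric.continuousWithinAt_iff] at hc
  obtain ⟨δ, hδ, hcd⟩ := hc (1/4) (by norm_num)
  -- pick x in (max (1/(n+1)) (1/n - δ), 1/n)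
  set a : ℝ := max (1/((n:ℝ)+1)) (1/(n:ℝ) - δ) with ha
  have hab : a < 1/(n:ℝ) := by
    apply max_lt
    · apply one_div_lt_one_div_of_lt hnpos; linarith
    · linarith
  obtain ⟨x, hxa, hxb⟩ := exists_between hab
  have hx1 : 1/((n:ℝ)+1) < x := lt_of_le_of_lt (le_max_left _ _) hxa
  have hxpos : 0 < x := lt_trans (by positivity) hx1
  have hxmem : x ∈ Ioc01 := ⟨hxpos, by
    have : 1/(n:ℝ) ≤ 1 := by rw [div_le_one hnpos]; linarith
    linarith⟩
  -- x is not a reciprocal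
  have hrx : r x = 0 := by
    rw [hr, if_neg]
    rintro ⟨m, hm1, hmx⟩
    have hmpos : (0:ℝ) < m := by exact_mod_cast hm1
    rw [hmx] at hx1 hxb
    have h1' : (n:ℝ) < m := by
      rw [div_lt_div_iff₀ hmpos hnpos] at hxb; linarith
    have h2' : (m:ℝ) < n + 1 := by
      rw [div_lt_div_iff₀ (by positivity) hmpos] at hx1; linarith
    have : n < m := by exact_mod_cast h1'
    have : m < n + 1 := by exact_mod_cast h2'
    omega
  -- |s x| < x
  have hsx : |s x| < x := by
    have := h1 x hxmem (lt_trans hxb hinv_lt)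
    rw [hrx, pow_one] at this
    simpa [abs_sub_comm] using this
  -- continuity bound
  have hnear : |s x - s (1/(n:ℝ))| < 1/4 := by
    have hd : dist x (1/(n:ℝ)) < δ := by
      rw [Real.dist_eq, abs_lt]
      constructor
      · have := lt_of_le_of_lt (le_max_right (1/((n:ℝ)+1)) _) hxa
        linarith
      · linarith
    simpa [Real.dist_eq] using hcd hxmem hd
  -- derive contradiction: s(1/n) > 1 - 1/n > 1 - 1/3 = 2/3, but s(1/n) < |s x| + 1/4 < 1/n + 1/4 < 1/3 + 1/4
  have habs := abs_lt.mp hnear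
  have habs2 := abs_lt.mp hsx
  have hninv : 1/(n:ℝ) < 1/3 := by
    rw [div_lt_div_iff₀ hnpos (by norm_num)]; linarith
  linarith [habs.1, habs.2, habs2.1, habs2.2]
end
end

section
/- For every continuous function r : (0,1] → ℝ there exists a smooth (infinitely differentiable) function s : (0,1] → ℝ such that |s(ε) - r(ε)| ≤ exp(-1/ε) for all ε ∈ (0,1]. -/
open Set

noncomputable section CarlemanAux
set_option maxHeartbeats 1000000

open Set Polynomial Finset

lemma exp_max_log {s : ℝ} (hs : 0 < s) : s ≤ Real.exp (max 0 (Real.log s)) := by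
  rcases le_total s 1 with h | h
  · calc s ≤ 1 := h
      _ = Real.exp 0 := Real.exp_zero.symm
      _ ≤ _ := Real.exp_le_exp.mpr (le_max_left _ _)
  · rw [max_eq_right (Real.log_nonneg h), Real.exp_log hs]

lemma polyRealEval (P : Polynomial ℝ) (x : ℝ) :
    (P.map Complex.ofRealHom).eval (x : ℂ) = ((P.eval x : ℝ) : ℂ) := by
  rw [Polynomial.eval_map]
  exact Polynomial.eval₂_at_apply Complex.ofRealHom x

lemma polyGrowth (P : Polynomial ℝ) (z : ℂ) :
    ‖(P.map Complex.ofRealHom).eval z‖ ≤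
      (∑ i ∈ Finset.range (P.natDegree + 1), |P.coeff i|) * Real.exp (P.natDegree * ‖z‖) := by
  have hdeg : (P.map Complex.ofRealHom).natDegree < P.natDegree + 1 :=
    Nat.lt_succ_of_le Polynomial.natDegree_map_le
  rw [Polynomial.eval_eq_sum_range' hdeg]
  calc ‖∑ i ∈ Finset.range (P.natDegree + 1), (P.map Complex.ofRealHom).coeff i * z ^ i‖
      ≤ ∑ i ∈ Finset.range (P.natDegree + 1), ‖(P.map Complex.ofRealHom).coeff i * z ^ i‖ :=
        norm_sum_le _ _
    _ ≤ ∑ i ∈ Finset.range (P.natDegree + 1), |P.coeff i| * Real.exp (P.natDegree * ‖z‖) := by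
        apply Finset.sum_le_sum
        intro i hi
        rw [norm_mul, norm_pow, Polynomial.coeff_map]
        have h1 : ‖Complex.ofRealHom (P.coeff i)‖ = |P.coeff i| := Complex.norm_real _
        rw [h1]
        apply mul_le_mul_of_nonneg_left _ (abs_nonneg _)
        calc ‖z‖ ^ i ≤ Real.exp ‖z‖ ^ i := by
              apply pow_le_pow_left₀ (norm_nonneg _)
              linarith [Real.add_one_le_exp ‖z‖]
          _ = Real.exp (i * ‖z‖) := (Real.exp_nat_mul _ _).symm
          _ ≤ Real.exp (P.natDegree * ‖z‖) := by
              apply Real.exp_le_exp.mpr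
              apply mul_le_mul_of_nonneg_right _ (norm_nonneg _)
              exact_mod_cast Nat.lt_succ_iff.mp (Finset.mem_range.mp hi)
    _ = _ := by rw [← Finset.sum_mul]

/-- Carleman-type analytic approximation on `[1, ∞)`. -/
lemma carleman (G : ℝ → ℝ) (hG : Continuous G) :
    ∃ h : ℝ → ℝ, (∀ x : ℝ, 1 ≤ x → AnalyticAt ℝ h x) ∧
      ∀ x : ℝ, 1 ≤ x → |h x - G x| ≤ Real.exp (-x) := by
  -- error budget
  set η : ℕ → ℝ := fun n => Real.exp (-(2 * n + 4)) / 8 with hη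
  have hηpos : ∀ n, 0 < η n := fun n => by positivity
  have hη_anti : ∀ n m : ℕ, n ≤ m → η m ≤ η n := by
    intro n m hnm
    apply div_le_div_of_nonneg_right _ (by norm_num)
    apply Real.exp_le_exp.mpr
    have : (n : ℝ) ≤ m := by exact_mod_cast hnm
    linarith
  -- Weierstrass polynomials
  have hp : ∀ n : ℕ, ∃ P : Polynomial ℝ,
      ∀ x ∈ Icc (0 : ℝ) (n + 3), |P.eval x - G x| ≤ η n := by
    intro n
    obtain ⟨P, hP⟩ := exists_polynomial_near_of_continuousOn 0 (n + 3) G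
      hG.continuousOn (η n) (hηpos n)
    exact ⟨P, fun x hx => (hP x hx).le⟩
  choose p hpG using hp
  set q : ℕ → Polynomial ℝ := fun n => p (n + 1) - p n with hq
  set d : ℕ → ℕ := fun n => (q n).natDegree with hd
  set C : ℕ → ℝ := fun n =>
    η n + ∑ i ∈ Finset.range (d n + 1), |(q n).coeff i| with hC
  have hCpos : ∀ n, 0 < C n := by
    intro n
    have : (0:ℝ) ≤ ∑ i ∈ Finset.range (d n + 1), |(q n).coeff i| :=
      Finset.sum_nonneg fun i _ => abs_nonneg _
    have := hηpos n; simp only [hC]; linarith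
  set k : ℕ → ℝ := fun n =>
    2 + d n + d n * (n + 3) + max 0 (Real.log (C n / (2 * η n))) with hk
  have hk2 : ∀ n, 2 ≤ k n := by
    intro n
    have h1 : (0:ℝ) ≤ d n := Nat.cast_nonneg _
    have h2 : (0:ℝ) ≤ d n * (n + 3) := by positivity
    have h3 : (0:ℝ) ≤ max 0 (Real.log (C n / (2 * η n))) := le_max_left _ _
    simp only [hk]; linarith
  -- complex objects
  set Q : ℕ → ℂ → ℂ := fun n z => ((q n).map Complex.ofRealHom).eval z with hQ
  set X : ℕ → ℂ → ℂ :=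
    fun n z => (1 + Complex.exp ((k n : ℂ) * ((n : ℂ) + 2 - z)))⁻¹ with hX
  set f : ℕ → ℂ → ℂ := fun n z => Q n z * X n z with hf
  set H : ℂ → ℂ := fun z => ((p 0).map Complex.ofRealHom).eval z + ∑' n, f n z with hH
  -- basic bounds
  have hQreal : ∀ (n : ℕ) (x : ℝ), Q n (x : ℂ) = (((q n).eval x : ℝ) : ℂ) :=
    fun n x => polyRealEval (q n) x
  have hQbound : ∀ n (z : ℂ), ‖Q n z‖ ≤ C n * Real.exp (d n * ‖z‖) := by
    intro n z
    calc ‖Q n z‖ ≤ (∑ i ∈ Finset.range (d n + 1), |(q n).coeff i|) *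
          Real.exp (d n * ‖z‖) := polyGrowth (q n) z
      _ ≤ C n * Real.exp (d n * ‖z‖) := by
          apply mul_le_mul_of_nonneg_right _ (Real.exp_nonneg _)
          have := hηpos n; simp only [hC]; linarith
  have hqloc : ∀ (n : ℕ) (x : ℝ), x ∈ Icc (0 : ℝ) (n + 3) → |(q n).eval x| ≤ 2 * η n := by
    intro n x hx
    have h1 := hpG n x hx
    have h2 : x ∈ Icc (0 : ℝ) ((n + 1 : ℕ) + 3) := by
      constructor
      · exact hx.1
      · push_cast; have := hx.2; push_cast at this ⊢; linarith
    have h3 := hpG (n + 1) x h2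
    have h4 : η (n + 1) ≤ η n := hη_anti n (n + 1) (Nat.le_succ n)
    have : (q n).eval x = ((p (n+1)).eval x - G x) - ((p n).eval x - G x) := by
      simp only [hq, Polynomial.eval_sub]; ring
    rw [this]
    calc |((p (n+1)).eval x - G x) - ((p n).eval x - G x)|
        ≤ |(p (n+1)).eval x - G x| + |(p n).eval x - G x| := abs_sub _ _
      _ ≤ 2 * η n := by linarith
  -- key growth inequality
  have hA' : ∀ (n : ℕ) (x : ℝ), (n : ℝ) + 3 ≤ x →
      C n * Real.exp (d n * x) ≤ 2 * η n * Real.exp ((k n - 1) * (x - (n + 2))) := by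
    intro n x hx3
    have hdpos : (0:ℝ) ≤ d n := Nat.cast_nonneg _
    have hnpos : (0:ℝ) ≤ (n:ℝ) + 3 := by positivity
    set L := max 0 (Real.log (C n / (2 * η n))) with hL
    have hL0 : 0 ≤ L := le_max_left _ _
    have hk1 : k n - 1 = 1 + d n + d n * ((n:ℝ) + 3) + L := by
      simp only [hk, hL]; ring
    have h1 : (d n : ℝ) ≤ k n - 1 := by
      rw [hk1]; nlinarith
    have h2 : (d n : ℝ) * (x - ((n:ℝ)+3)) ≤ (k n - 1) * (x - ((n:ℝ)+3)) :=
      mul_le_mul_of_nonneg_right h1 (by linarith)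
    have hexp : (d n : ℝ) * x + L ≤ (k n - 1) * (x - ((n:ℝ) + 2)) := by
      have e1 : (k n - 1) * (x - ((n:ℝ)+2)) =
          (k n - 1) * (x - ((n:ℝ)+3)) + (k n - 1) := by ring
      rw [e1, hk1]; nlinarith
    have hs : C n / (2 * η n) ≤ Real.exp L := exp_max_log (by positivity)
    calc C n * Real.exp ((d n : ℝ) * x)
        = 2 * η n * ((C n / (2 * η n)) * Real.exp ((d n : ℝ) * x)) := by
          field_simp
          rw [mul_div_assoc, div_self (hηpos n).ne', mul_one]
      _ ≤ 2 * η n * (Real.exp L * Real.exp ((d n : ℝ) * x)) := by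
          apply mul_le_mul_of_nonneg_left _ (by positivity)
          exact mul_le_mul_of_nonneg_right hs (Real.exp_nonneg _)
      _ = 2 * η n * Real.exp (L + (d n : ℝ) * x) := by rw [Real.exp_add]
      _ ≤ 2 * η n * Real.exp ((k n - 1) * (x - ((n:ℝ) + 2))) := by
          apply mul_le_mul_of_nonneg_left _ (by positivity)
          exact Real.exp_le_exp.mpr (by linarith)
  have hkey : ∀ (n : ℕ) (x : ℝ), (n : ℝ) + 2 ≤ x →
      |(q n).eval x| ≤ 2 * η n * Real.exp ((k n - 1) * (x - (n + 2))) := by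
    intro n x hx2
    have hn0 : (0:ℝ) ≤ (n:ℝ) := Nat.cast_nonneg _
    have h0 : (0:ℝ) ≤ x := by linarith
    rcases le_total x ((n:ℝ) + 3) with hc | hc
    · have h1 : |(q n).eval x| ≤ 2 * η n := hqloc n x ⟨h0, hc⟩
      have h2 : (1:ℝ) ≤ Real.exp ((k n - 1) * (x - ((n:ℝ)+2))) := by
        apply Real.one_le_exp
        have := hk2 n; nlinarith
      calc |(q n).eval x| ≤ 2 * η n := h1
        _ ≤ _ := le_mul_of_one_le_right (by positivity) h2
    · have h1 : |(q n).eval x| = ‖Q n (x : ℂ)‖ := by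
        rw [hQreal n x, Complex.norm_real, Real.norm_eq_abs]
      have h2 : ‖(x : ℂ)‖ = x := by
        rw [Complex.norm_real, Real.norm_eq_abs, abs_of_nonneg h0]
      rw [h1]
      calc ‖Q n (x:ℂ)‖ ≤ C n * Real.exp (d n * ‖(x:ℂ)‖) := hQbound n _
        _ = C n * Real.exp (d n * x) := by rw [h2]
        _ ≤ _ := hA' n x hc
  -- real cutoff facts
  have hXreal : ∀ (n : ℕ) (x : ℝ),
      X n (x : ℂ) = (((1 + Real.exp (k n * ((n : ℝ) + 2 - x)))⁻¹ : ℝ) : ℂ) := by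
    intro n x
    simp only [hX]
    have e1 : ((k n : ℂ)) * ((n:ℂ) + 2 - (x:ℂ)) = ((k n * ((n:ℝ)+2 - x) : ℝ) : ℂ) := by
      push_cast; ring
    rw [e1, ← Complex.ofReal_exp]
    norm_cast
  have hXle1 : ∀ (n : ℕ) (x : ℝ), ‖X n (x : ℂ)‖ ≤ 1 := by
    intro n x
    rw [hXreal n x, Complex.norm_real, Real.norm_eq_abs, abs_of_nonneg (by positivity)]
    apply inv_le_one_of_one_le₀
    linarith [Real.exp_pos (k n * ((n:ℝ) + 2 - x))]
  have hXsub1 : ∀ (n : ℕ) (x : ℝ), (n : ℝ) + 2 ≤ x →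
      ‖X n (x : ℂ) - 1‖ ≤ Real.exp (-(k n) * (x - (n + 2))) := by
    intro n x hx
    rw [hXreal n x]
    set E := Real.exp (k n * ((n:ℝ) + 2 - x)) with hE
    have hEpos : 0 < E := Real.exp_pos _
    have e1 : (((1 + E)⁻¹ : ℝ) : ℂ) - 1 = (((1 + E)⁻¹ - 1 : ℝ) : ℂ) := by push_cast; ring
    rw [e1, Complex.norm_real, Real.norm_eq_abs]
    have h1 : (1 + E)⁻¹ - 1 = -(E / (1 + E)) := by field_simp; ring
    rw [h1, abs_neg, abs_of_nonneg (by positivity)]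
    have h2 : E / (1 + E) ≤ E := by
      rw [div_le_iff₀ (by linarith)]; nlinarith
    calc E / (1 + E) ≤ E := h2
      _ = Real.exp (-(k n) * (x - ((n:ℝ) + 2))) := by rw [hE]; congr 1; ring
  -- term bounds at real points
  have hterm_lo : ∀ (n : ℕ) (x : ℝ), (n : ℝ) + 2 ≤ x →
      ‖f n (x : ℂ) - Q n (x : ℂ)‖ ≤ 2 * η n * Real.exp (-(x - (n + 2))) := by
    intro n x hx
    have h1 : f n (x:ℂ) - Q n (x:ℂ) = Q n (x:ℂ) * (X n (x:ℂ) - 1) := by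
      simp only [hf]; ring
    rw [h1, norm_mul]
    have h2 : ‖Q n (x:ℂ)‖ = |(q n).eval x| := by rw [hQreal n x, Complex.norm_real, Real.norm_eq_abs]
    calc ‖Q n (x:ℂ)‖ * ‖X n (x:ℂ) - 1‖
        ≤ (2 * η n * Real.exp ((k n - 1) * (x - ((n:ℝ)+2)))) *
          Real.exp (-(k n) * (x - ((n:ℝ)+2))) := by
          apply mul_le_mul (h2 ▸ hkey n x hx) (hXsub1 n x hx) (norm_nonneg _) (by positivity)
      _ = 2 * η n * Real.exp (-(x - ((n:ℝ)+2))) := by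
          rw [mul_assoc, ← Real.exp_add]
          congr 2
          ring
  have hterm_hi : ∀ (n : ℕ) (x : ℝ), 0 ≤ x → x ≤ (n : ℝ) + 3 → ‖f n (x : ℂ)‖ ≤ 2 * η n := by
    intro n x h0 h3
    simp only [hf, norm_mul]
    have h2 : ‖Q n (x:ℂ)‖ = |(q n).eval x| := by rw [hQreal n x, Complex.norm_real, Real.norm_eq_abs]
    calc ‖Q n (x:ℂ)‖ * ‖X n (x:ℂ)‖ ≤ (2 * η n) * 1 :=
        mul_le_mul (h2 ▸ hqloc n x ⟨h0, h3⟩) (hXle1 n x) (norm_nonneg _) (by positivity)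
      _ = 2 * η n := mul_one _
  -- geometric tail bound for η
  have hηtail : ∀ N : ℕ, (Summable fun m => η (m + N)) ∧
      ∑' m, η (m + N) ≤ Real.exp (-(2 * N + 4)) / 4 := by
    intro N
    have hlt : Real.exp (-2) < 1 := Real.exp_lt_one_iff.mpr (by norm_num)
    have hgeo : Summable (fun m : ℕ => (Real.exp (-2))^m) :=
      summable_geometric_of_lt_one (Real.exp_nonneg _) hlt
    have heq : ∀ m : ℕ, η (m + N) = (Real.exp (-2))^m * (Real.exp (-(2 * N + 4)) / 8) := by
      intro m
      simp only [hη]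
      rw [← Real.exp_nat_mul]
      have e2 : Real.exp ((m:ℝ) * -2) * (Real.exp (-(2 * N + 4)) / 8) =
          Real.exp ((m:ℝ) * -2 + -(2 * (N:ℝ) + 4)) / 8 := by
        rw [Real.exp_add]; ring
      rw [e2]
      congr 1
      push_cast
      ring
    have hsum : Summable (fun m => η (m + N)) := by
      simp_rw [heq]; exact hgeo.mul_right _
    refine ⟨hsum, ?_⟩
    have hhalf : Real.exp (-2) ≤ 1/2 := by
      rw [Real.exp_neg]
      rw [inv_le_comm₀ (Real.exp_pos _) (by norm_num)]
      calc (1/2 : ℝ)⁻¹ = 2 := by norm_num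
        _ ≤ Real.exp 2 := by nlinarith [Real.add_one_le_exp (2:ℝ)]
    have htsum : (∑' m : ℕ, (Real.exp (-2))^m) ≤ 2 := by
      rw [tsum_geometric_of_lt_one (Real.exp_nonneg _) hlt]
      have h5 : (1/2 : ℝ) ≤ 1 - Real.exp (-2) := by linarith
      calc (1 - Real.exp (-2))⁻¹ ≤ (1/2 : ℝ)⁻¹ := by
            apply inv_anti₀ (by norm_num) h5
        _ = 2 := by norm_num
    calc ∑' m, η (m + N) = (∑' m : ℕ, (Real.exp (-2))^m) * (Real.exp (-(2 * N + 4)) / 8) := by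
          simp_rw [heq]; exact tsum_mul_right
      _ ≤ 2 * (Real.exp (-(2 * N + 4)) / 8) := by
          apply mul_le_mul_of_nonneg_right htsum (by positivity)
      _ = Real.exp (-(2 * N + 4)) / 4 := by ring
  -- complex tail bounds near a real basepoint
  have hEbig : ∀ (x₀ : ℝ) (n : ℕ) (z : ℂ), 1 ≤ x₀ → x₀ ≤ n →
      z ∈ Metric.ball (x₀ : ℂ) (1/2) →
      2 ≤ ‖Complex.exp ((k n : ℂ) * ((n : ℂ) + 2 - z))‖ := by
    intro x₀ n z hx₀ hn hz
    have hd : ‖z - (x₀:ℂ)‖ < 1/2 := by rwa [Metric.mem_ball, dist_eq_norm] at hz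
    have hz1 : z.re - x₀ ≤ ‖z - (x₀:ℂ)‖ := by
      calc z.re - x₀ = (z - (x₀:ℂ)).re := by simp
        _ ≤ |(z - (x₀:ℂ)).re| := le_abs_self _
        _ ≤ ‖z - (x₀:ℂ)‖ := by exact Complex.abs_re_le_norm _
    have hzre : z.re ≤ x₀ + 1/2 := by linarith
    have hwre : ((k n : ℂ) * ((n:ℂ) + 2 - z)).re = k n * ((n:ℝ) + 2 - z.re) := by
      rw [show ((k n : ℂ)) = ((k n : ℝ) : ℂ) from rfl, Complex.re_ofReal_mul]
      simp
    have h2 : 2 ≤ k n * ((n:ℝ) + 2 - z.re) := by nlinarith [hk2 n]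
    calc (2:ℝ) ≤ Real.exp 2 := by nlinarith [Real.add_one_le_exp (2:ℝ)]
      _ ≤ Real.exp (((k n : ℂ) * ((n:ℂ) + 2 - z)).re) := by
          rw [hwre]; exact Real.exp_le_exp.mpr h2
      _ = ‖Complex.exp ((k n : ℂ) * ((n:ℂ) + 2 - z))‖ := by
          rw [Complex.norm_exp]
  have htail : ∀ (x₀ : ℝ) (n : ℕ) (z : ℂ), 1 ≤ x₀ → x₀ ≤ n →
      z ∈ Metric.ball (x₀ : ℂ) (1/2) → ‖f n z‖ ≤ 4 * η n := by
    intro x₀ n z hx₀ hn hz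
    have hE2 := hEbig x₀ n z hx₀ hn hz
    set w := (k n : ℂ) * ((n:ℂ) + 2 - z) with hw
    have hd : ‖z - (x₀:ℂ)‖ < 1/2 := by rwa [Metric.mem_ball, dist_eq_norm] at hz
    have hz1 : z.re - x₀ ≤ ‖z - (x₀:ℂ)‖ := by
      calc z.re - x₀ = (z - (x₀:ℂ)).re := by simp
        _ ≤ |(z - (x₀:ℂ)).re| := le_abs_self _
        _ ≤ ‖z - (x₀:ℂ)‖ := by exact Complex.abs_re_le_norm _
    have hzre : z.re ≤ x₀ + 1/2 := by linarith
    have hwre : w.re = k n * ((n:ℝ) + 2 - z.re) := by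
      rw [hw, show ((k n : ℂ)) = ((k n : ℝ) : ℂ) from rfl, Complex.re_ofReal_mul]
      simp
    have hEnorm : ‖Complex.exp w‖ = Real.exp w.re := by
      rw [Complex.norm_exp]
    have hkt : k n ≤ w.re := by
      rw [hwre]
      have h1 : (1:ℝ) ≤ (n:ℝ) + 2 - z.re := by linarith
      nlinarith [hk2 n]
    -- bound on the cutoff
    have hXb : ‖X n z‖ ≤ 2 * Real.exp (-(k n)) := by
      have hden : Real.exp (k n) / 2 ≤ ‖1 + Complex.exp w‖ := by
        have h1 : ‖Complex.exp w‖ ≤ ‖1 + Complex.exp w‖ + 1 := by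
          calc ‖Complex.exp w‖ = ‖(1 + Complex.exp w) - 1‖ := by ring_nf
            _ ≤ ‖1 + Complex.exp w‖ + ‖(1:ℂ)‖ := norm_sub_le _ _
            _ = ‖1 + Complex.exp w‖ + 1 := by rw [norm_one]
        have h2 : Real.exp (k n) ≤ ‖Complex.exp w‖ := by
          rw [hEnorm]; exact Real.exp_le_exp.mpr hkt
        linarith
      have hXz : X n z = (1 + Complex.exp w)⁻¹ := rfl
      rw [hXz, norm_inv]
      have hpos : (0:ℝ) < Real.exp (k n) / 2 := by positivity
      calc ‖1 + Complex.exp w‖⁻¹ ≤ (Real.exp (k n) / 2)⁻¹ :=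
            inv_anti₀ hpos hden
        _ = 2 * Real.exp (-(k n)) := by rw [Real.exp_neg]; field_simp
    -- bound on the polynomial
    have hQb : ‖Q n z‖ ≤ C n * Real.exp (d n * ((n:ℝ) + 1)) := by
      have hzb : ‖z‖ ≤ (n:ℝ) + 1 := by
        calc ‖z‖ = ‖(x₀:ℂ) + (z - (x₀:ℂ))‖ := by ring_nf
          _ ≤ ‖(x₀:ℂ)‖ + ‖z - (x₀:ℂ)‖ := norm_add_le _ _
          _ ≤ x₀ + 1/2 := by
              have : ‖(x₀:ℂ)‖ = |x₀| := Complex.norm_real _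
              rw [this, abs_of_nonneg (by linarith)]
              linarith
          _ ≤ (n:ℝ) + 1 := by linarith
      calc ‖Q n z‖ ≤ C n * Real.exp (d n * ‖z‖) := hQbound n z
        _ ≤ C n * Real.exp (d n * ((n:ℝ) + 1)) := by
            apply mul_le_mul_of_nonneg_left _ (hCpos n).le
            apply Real.exp_le_exp.mpr
            exact mul_le_mul_of_nonneg_left hzb (Nat.cast_nonneg _)
    -- combine
    set L := max 0 (Real.log (C n / (2 * η n))) with hL
    have hinv : Real.exp (-L) ≤ 2 * η n / C n := by
      have hs := exp_max_log (show (0:ℝ) < C n / (2 * η n) by positivity)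
      rw [Real.exp_neg]
      calc (Real.exp L)⁻¹ ≤ (C n / (2 * η n))⁻¹ := by
            apply inv_anti₀ (by positivity) hs
        _ = 2 * η n / C n := by rw [inv_div]
    have hM : C n * Real.exp (d n * ((n:ℝ) + 1)) * (2 * Real.exp (-(k n))) ≤ 4 * η n := by
      have hkdecomp : -(k n) = -(2 + (d n:ℝ) + d n * ((n:ℝ) + 3)) + -L := by
        simp only [hk, hL]; ring
      rw [hkdecomp, Real.exp_add]
      calc C n * Real.exp (d n * ((n:ℝ)+1)) *
            (2 * (Real.exp (-(2 + (d n:ℝ) + d n * ((n:ℝ)+3))) * Real.exp (-L)))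
          ≤ C n * Real.exp (d n * ((n:ℝ)+1)) *
            (2 * (Real.exp (-(2 + (d n:ℝ) + d n * ((n:ℝ)+3))) * (2 * η n / C n))) := by
            have hc0 := (hCpos n).le
            have he0 := Real.exp_nonneg (d n * ((n:ℝ)+1))
            have he1 := Real.exp_nonneg (-(2 + (d n:ℝ) + d n * ((n:ℝ)+3)))
            apply mul_le_mul_of_nonneg_left _ (by positivity)
            apply mul_le_mul_of_nonneg_left _ (by norm_num)
            exact mul_le_mul_of_nonneg_left hinv he1
        _ = 4 * η n * (Real.exp (d n * ((n:ℝ)+1)) *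
              Real.exp (-(2 + (d n:ℝ) + d n * ((n:ℝ)+3)))) := by
            field_simp
            ring_nf
            rw [mul_assoc (C n), mul_comm (η n), ← mul_assoc, mul_inv_cancel₀ (hCpos n).ne', one_mul]
        _ = 4 * η n * Real.exp (d n * ((n:ℝ)+1) - (2 + (d n:ℝ) + d n * ((n:ℝ)+3))) := by
            rw [← Real.exp_add]
            ring_nf
        _ ≤ 4 * η n * 1 := by
            apply mul_le_mul_of_nonneg_left _ (by positivity)
            apply Real.exp_le_one_iff.mpr
            have : (0:ℝ) ≤ (d n : ℝ) := Nat.cast_nonneg _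
            nlinarith
        _ = 4 * η n := mul_one _
    calc ‖f n z‖ = ‖Q n z‖ * ‖X n z‖ := by simp only [hf]; exact norm_mul _ _
      _ ≤ (C n * Real.exp (d n * ((n:ℝ)+1))) * (2 * Real.exp (-(k n))) :=
          mul_le_mul hQb hXb (norm_nonneg _) (by positivity)
      _ ≤ 4 * η n := hM
  -- analyticity of H at real points ≥ 1
  have hHanal : ∀ x₀ : ℝ, 1 ≤ x₀ → AnalyticAt ℂ H (x₀ : ℂ) := by
    intro x₀ hx₀
    set n₀ : ℕ := Nat.ceil x₀ + 1 with hn₀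
    have hn₀x : ∀ n : ℕ, n₀ ≤ n → x₀ ≤ n := by
      intro n hn
      calc x₀ ≤ (Nat.ceil x₀ : ℝ) := Nat.le_ceil x₀
        _ ≤ (n : ℝ) := by exact_mod_cast le_trans (Nat.le_succ _) hn
    have hmem : ((x₀ : ℂ)) ∈ Metric.ball ((x₀:ℝ) : ℂ) (1/2) := Metric.mem_ball_self (by norm_num)
    have hopen : IsOpen (Metric.ball ((x₀:ℝ) : ℂ) (1/2)) := Metric.isOpen_ball
    -- nonvanishing denominators on the ball, for large indices
    have hne : ∀ n : ℕ, n₀ ≤ n → ∀ z ∈ Metric.ball ((x₀:ℝ) : ℂ) (1/2),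
        (1 + Complex.exp ((k n : ℂ) * ((n : ℂ) + 2 - z))) ≠ 0 := by
      intro n hn z hz h0
      have h1 : Complex.exp ((k n : ℂ) * ((n : ℂ) + 2 - z)) = -1 := by
        linear_combination h0
      have h2 := hEbig x₀ n z hx₀ (hn₀x n hn) hz
      rw [h1] at h2
      simp at h2
    -- differentiability of large-index terms on the ball
    have hfd : ∀ n : ℕ, n₀ ≤ n → DifferentiableOn ℂ (f n) (Metric.ball ((x₀:ℝ) : ℂ) (1/2)) := by
      intro n hn
      apply DifferentiableOn.mul
      · exact (Polynomial.differentiable _).differentiableOn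
      · apply DifferentiableOn.inv
        · apply Differentiable.differentiableOn
          exact (differentiable_const 1).add
            (Complex.differentiable_exp.comp
              (((differentiable_const ((n:ℂ) + 2)).sub differentiable_id).const_mul _))
        · exact hne n hn
    -- tail is differentiable on the ball
    have hT : DifferentiableOn ℂ (fun z => ∑' m, f (m + n₀) z)
        (Metric.ball ((x₀:ℝ) : ℂ) (1/2)) := by
      refine ((tendstoUniformlyOn_tsum_nat (u := fun m => 4 * η (m + n₀))
        ((hηtail n₀).1.mul_left 4) ?_).tendstoLocallyUniformlyOn).differentiableOn ?_ hopen
      · intro m z hz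
        exact htail x₀ (m + n₀) z hx₀ (hn₀x _ (Nat.le_add_left _ _)) hz
      · apply Filter.Eventually.of_forall
        intro N
        apply DifferentiableOn.fun_sum
        intro m _
        exact hfd _ (Nat.le_add_left _ _)
    -- the local analytic representative
    have hg : AnalyticAt ℂ (fun z => ((p 0).map Complex.ofRealHom).eval z +
        ((∑ n ∈ Finset.range n₀, f n z) + ∑' m, f (m + n₀) z)) ((x₀:ℝ) : ℂ) := by
      apply AnalyticAt.add
      · exact (Polynomial.differentiable _).analyticAt _
      apply AnalyticAt.add
      · apply Finset.analyticAt_fun_sum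
        intro n _
        apply AnalyticAt.mul
        · exact (Polynomial.differentiable _).analyticAt _
        · apply AnalyticAt.inv
          · apply AnalyticAt.add analyticAt_const
            apply AnalyticAt.comp analyticAt_cexp
            exact analyticAt_const.mul (analyticAt_const.sub analyticAt_id)
          · have e1 : (k n : ℂ) * ((n : ℂ) + 2 - ((x₀:ℝ):ℂ)) =
                ((k n * ((n:ℝ) + 2 - x₀) : ℝ) : ℂ) := by push_cast; ring
            have h1 : (1 : ℂ) + Complex.exp ((k n : ℂ) * ((n : ℂ) + 2 - ((x₀:ℝ):ℂ)))
                = ((1 + Real.exp (k n * ((n:ℝ) + 2 - x₀)) : ℝ) : ℂ) := by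
              rw [e1, ← Complex.ofReal_exp]
              push_cast
              ring
            intro h0
            rw [h1, Complex.ofReal_eq_zero] at h0
            linarith [Real.exp_pos (k n * ((n:ℝ) + 2 - x₀))]
      · exact hT.analyticAt (hopen.mem_nhds hmem)
    -- H agrees with the representative near x₀
    apply AnalyticAt.congr hg
    filter_upwards [hopen.mem_nhds hmem] with z hz
    have hsz : Summable (fun n => f n z) := by
      rw [← summable_nat_add_iff n₀]
      apply Summable.of_norm_bounded ((hηtail n₀).1.mul_left 4)
      intro m
      exact htail x₀ _ z hx₀ (hn₀x _ (Nat.le_add_left _ _)) hz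
    simp only [hH]
    congr 1
    exact hsz.sum_add_tsum_nat_add n₀
  -- error bound for H at real points ≥ 1
  have hHerr : ∀ x : ℝ, 1 ≤ x → ‖H (x : ℂ) - ((G x : ℝ) : ℂ)‖ ≤ Real.exp (-x) := by
    intro x hx
    set N : ℕ := Nat.floor (x - 1) with hNdef
    have hx0 : (0:ℝ) ≤ x - 1 := by linarith
    have hN1 : (N:ℝ) ≤ x - 1 := Nat.floor_le hx0
    have hN2 : x - 1 < (N:ℝ) + 1 := Nat.lt_floor_add_one (x - 1)
    have hxN1 : (N:ℝ) + 1 ≤ x := by linarith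
    have hxN2 : x < (N:ℝ) + 2 := by linarith
    -- summability at x
    have hnorm_bd : ∀ m : ℕ, ‖f (m + N) (x:ℂ)‖ ≤ 2 * η (m + N) := by
      intro m
      apply hterm_hi (m + N) x (by linarith)
      push_cast
      linarith
    have hsum : Summable (fun n => f n (x:ℂ)) := by
      rw [← summable_nat_add_iff N]
      exact Summable.of_norm_bounded
        ((hηtail N).1.mul_left 2) hnorm_bd
    have hsplit : (∑ n ∈ Finset.range N, f n (x:ℂ)) + ∑' m, f (m + N) (x:ℂ)
        = ∑' n, f n (x:ℂ) := hsum.sum_add_tsum_nat_add N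
    -- telescoping
    have hQtel : ∀ n : ℕ, Q n (x:ℂ) =
        ((p (n+1)).map Complex.ofRealHom).eval (x:ℂ) -
        ((p n).map Complex.ofRealHom).eval (x:ℂ) := by
      intro n
      simp only [hQ, hq, Polynomial.map_sub, Polynomial.eval_sub]
    have htel : ∑ n ∈ Finset.range N, Q n (x:ℂ) =
        ((p N).map Complex.ofRealHom).eval (x:ℂ) -
        ((p 0).map Complex.ofRealHom).eval (x:ℂ) := by
      rw [Finset.sum_congr rfl (fun n _ => hQtel n)]
      exact Finset.sum_range_sub (fun j => ((p j).map Complex.ofRealHom).eval (x:ℂ)) N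
    -- main identity
    have hid : H (x:ℂ) - ((G x : ℝ) : ℂ) =
        (((p N).map Complex.ofRealHom).eval (x:ℂ) - ((G x : ℝ) : ℂ))
        + (∑ n ∈ Finset.range N, (f n (x:ℂ) - Q n (x:ℂ)))
        + ∑' m, f (m + N) (x:ℂ) := by
      have e2 : ∑ n ∈ Finset.range N, f n (x:ℂ)
          = (∑ n ∈ Finset.range N, (f n (x:ℂ) - Q n (x:ℂ)))
            + ∑ n ∈ Finset.range N, Q n (x:ℂ) := by
        rw [← Finset.sum_add_distrib]
        apply Finset.sum_congr rfl
        intro n _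
        ring
      have e1 : H (x:ℂ) = ((p 0).map Complex.ofRealHom).eval (x:ℂ) +
          ((∑ n ∈ Finset.range N, f n (x:ℂ)) + ∑' m, f (m + N) (x:ℂ)) := by
        rw [hsplit]
      rw [e1, e2, htel]
      ring
    -- bounds on pieces
    have hb1 : ‖((p N).map Complex.ofRealHom).eval (x:ℂ) - ((G x : ℝ) : ℂ)‖
        ≤ Real.exp (-x) / 8 := by
      rw [polyRealEval, ← Complex.ofReal_sub, Complex.norm_real, Real.norm_eq_abs]
      calc |(p N).eval x - G x| ≤ η N := hpG N x ⟨by linarith, by linarith⟩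
        _ ≤ Real.exp (-x) / 8 := by
            apply div_le_div_of_nonneg_right _ (by norm_num)
            apply Real.exp_le_exp.mpr
            linarith
    have hb2 : ‖∑ n ∈ Finset.range N, (f n (x:ℂ) - Q n (x:ℂ))‖ ≤ Real.exp (-x) / 8 := by
      calc ‖∑ n ∈ Finset.range N, (f n (x:ℂ) - Q n (x:ℂ))‖
          ≤ ∑ n ∈ Finset.range N, ‖f n (x:ℂ) - Q n (x:ℂ)‖ := norm_sum_le _ _
        _ ≤ ∑ n ∈ Finset.range N, Real.exp (-x) * (1/16) * (1/2:ℝ)^n := by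
            apply Finset.sum_le_sum
            intro n hn
            have hnN : (n:ℝ) + 1 ≤ (N:ℝ) := by
              exact_mod_cast Nat.succ_le_of_lt (Finset.mem_range.mp hn)
            have hnx : (n:ℝ) + 2 ≤ x := by linarith
            have hprod : Real.exp (-(2*(n:ℝ)+4)) * Real.exp (-(x-((n:ℝ)+2)))
                = Real.exp (-x) * Real.exp (-(n:ℝ)-2) := by
              rw [← Real.exp_add, ← Real.exp_add]
              ring_nf
            have hhalf : Real.exp (-1 : ℝ) ≤ 1/2 := by
              rw [Real.exp_neg]
              rw [inv_le_comm₀ (Real.exp_pos _) (by norm_num)]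
              nlinarith [Real.add_one_le_exp (1:ℝ)]
            calc ‖f n (x:ℂ) - Q n (x:ℂ)‖ ≤ 2 * η n * Real.exp (-(x - ((n:ℝ)+2))) :=
                  hterm_lo n x hnx
              _ = (Real.exp (-(2*(n:ℝ)+4)) * Real.exp (-(x-((n:ℝ)+2)))) / 4 := by
                  simp only [hη]; ring
              _ = Real.exp (-x) * (1/4) * Real.exp (-(n:ℝ)-2) := by rw [hprod]; ring
              _ ≤ Real.exp (-x) * (1/16) * (1/2)^n := by
                  have hexpn : Real.exp (-(n:ℝ)) ≤ (1/2:ℝ)^n := by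
                    calc Real.exp (-(n:ℝ)) = (Real.exp (-1:ℝ))^n := by
                          rw [← Real.exp_nat_mul]; congr 1; ring
                      _ ≤ (1/2:ℝ)^n := pow_le_pow_left₀ (Real.exp_nonneg _) hhalf n
                  have hexp2 : Real.exp (-2:ℝ) ≤ (1/4:ℝ) := by
                    calc Real.exp (-2:ℝ) = (Real.exp (-1:ℝ))^2 := by
                          rw [sq, ← Real.exp_add]; norm_num
                      _ ≤ (1/2:ℝ)^2 := pow_le_pow_left₀ (Real.exp_nonneg _) hhalf 2
                      _ = 1/4 := by norm_num
                  have hsplit2 : Real.exp (-(n:ℝ)-2) = Real.exp (-(n:ℝ)) * Real.exp (-2:ℝ) := by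
                    rw [← Real.exp_add]; ring_nf
                  calc Real.exp (-x) * (1/4) * Real.exp (-(n:ℝ)-2)
                      = Real.exp (-x) * (1/4) * (Real.exp (-(n:ℝ)) * Real.exp (-2:ℝ)) := by
                        rw [hsplit2]
                    _ ≤ Real.exp (-x) * (1/4) * ((1/2:ℝ)^n * (1/4:ℝ)) := by
                        apply mul_le_mul_of_nonneg_left _ (by positivity)
                        exact mul_le_mul hexpn hexp2 (Real.exp_nonneg _) (by positivity)
                    _ = Real.exp (-x) * (1/16) * (1/2:ℝ)^n := by ring
        _ = Real.exp (-x) * (1/16) * ∑ n ∈ Finset.range N, (1/2:ℝ)^n := by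
            rw [← Finset.mul_sum]
        _ ≤ Real.exp (-x) * (1/16) * 2 := by
            apply mul_le_mul_of_nonneg_left (sum_geometric_two_le N) (by positivity)
        _ = Real.exp (-x) / 8 := by ring
    have hb3 : ‖∑' m, f (m + N) (x:ℂ)‖ ≤ Real.exp (-x) / 2 := by
      have hsn : Summable (fun m => ‖f (m + N) (x:ℂ)‖) :=
        Summable.of_nonneg_of_le (fun m => norm_nonneg _) hnorm_bd
          ((hηtail N).1.mul_left 2)
      calc ‖∑' m, f (m + N) (x:ℂ)‖ ≤ ∑' m, ‖f (m + N) (x:ℂ)‖ :=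
            norm_tsum_le_tsum_norm hsn
        _ ≤ ∑' m, 2 * η (m + N) :=
            Summable.tsum_le_tsum hnorm_bd hsn ((hηtail N).1.mul_left 2)
        _ = 2 * ∑' m, η (m + N) := tsum_mul_left
        _ ≤ 2 * (Real.exp (-(2 * N + 4)) / 4) :=
            mul_le_mul_of_nonneg_left (hηtail N).2 (by norm_num)
        _ ≤ Real.exp (-x) / 2 := by
            have : Real.exp (-(2 * (N:ℝ) + 4)) ≤ Real.exp (-x) :=
              Real.exp_le_exp.mpr (by linarith)
            linarith
    calc ‖H (x:ℂ) - ((G x : ℝ) : ℂ)‖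
        = ‖(((p N).map Complex.ofRealHom).eval (x:ℂ) - ((G x : ℝ) : ℂ))
            + (∑ n ∈ Finset.range N, (f n (x:ℂ) - Q n (x:ℂ)))
            + ∑' m, f (m + N) (x:ℂ)‖ := by rw [hid]
      _ ≤ ‖(((p N).map Complex.ofRealHom).eval (x:ℂ) - ((G x : ℝ) : ℂ))
            + (∑ n ∈ Finset.range N, (f n (x:ℂ) - Q n (x:ℂ)))‖
          + ‖∑' m, f (m + N) (x:ℂ)‖ := norm_add_le _ _
      _ ≤ ‖((p N).map Complex.ofRealHom).eval (x:ℂ) - ((G x : ℝ) : ℂ)‖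
          + ‖∑ n ∈ Finset.range N, (f n (x:ℂ) - Q n (x:ℂ))‖
          + ‖∑' m, f (m + N) (x:ℂ)‖ := by
            have := norm_add_le (((p N).map Complex.ofRealHom).eval (x:ℂ) - ((G x : ℝ) : ℂ))
              (∑ n ∈ Finset.range N, (f n (x:ℂ) - Q n (x:ℂ)))
            linarith
      _ ≤ Real.exp (-x) / 8 + Real.exp (-x) / 8 + Real.exp (-x) / 2 := by
          linarith
      _ ≤ Real.exp (-x) := by linarith [Real.exp_pos (-x)]
  -- conclude
  refine ⟨fun x => (H (x : ℂ)).re, ?_, ?_⟩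
  · intro x hx
    have h1 : AnalyticAt ℝ (fun t : ℝ => H (t : ℂ)) x :=
      ((hHanal x hx).restrictScalars).comp (Complex.ofRealCLM.analyticAt x)
    exact (Complex.reCLM.analyticAt _).comp h1
  · intro x hx
    have h1 := hHerr x hx
    calc |(H (x : ℂ)).re - G x| = |(H (x : ℂ) - ((G x : ℝ) : ℂ)).re| := by
          rw [Complex.sub_re, Complex.ofReal_re]
      _ ≤ ‖H (x : ℂ) - ((G x : ℝ) : ℂ)‖ := Complex.abs_re_le_norm _
      _ ≤ Real.exp (-x) := h1


end CarlemanAux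

noncomputable section
set_option maxHeartbeats 1000000

open Set

/-- Every continuous net on (0,1] can be approximated by a smooth net up to exp(-1/ε). -/
theorem stmt1 (r : ℝ → ℝ) (hr : ContinuousOn r Ioc01) :
    ∃ s : ℝ → ℝ, ContDiffOn ℝ (⊤ : ℕ∞) s Ioc01 ∧
      ∀ ε ∈ Ioc01, |s ε - r ε| ≤ Real.exp (-1 / ε) := by
  set G : ℝ → ℝ := fun t => r (1 / max t 1) with hG
  have hmaps : ∀ t : ℝ, 1 / max t 1 ∈ Ioc01 := by
    intro t
    have h1 : (1:ℝ) ≤ max t 1 := le_max_right _ _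
    constructor
    · positivity
    · rw [div_le_one (by linarith)]; linarith
  have hGcont : Continuous G := by
    apply hr.comp_continuous
    · exact continuous_const.div (continuous_id.max continuous_const)
        (fun t => by have := le_max_right t 1; positivity)
    · exact hmaps
  obtain ⟨h, hanal, herr⟩ := carleman G hGcont
  refine ⟨fun ε => h ε⁻¹, ?_, ?_⟩
  · have hA : AnalyticOnNhd ℝ (fun ε : ℝ => h ε⁻¹) Ioc01 := by
      intro ε hε
      have h1 : (1:ℝ) ≤ ε⁻¹ := (one_le_inv₀ hε.1).mpr hε.2
      exact (hanal ε⁻¹ h1).comp (analyticAt_inv (ne_of_gt hε.1))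
    exact hA.contDiffOn (uniqueDiffOn_Ioc 0 1)
  · intro ε hε
    have hε0 := hε.1
    have h1 : (1:ℝ) ≤ ε⁻¹ := (one_le_inv₀ hε.1).mpr hε.2
    have hmax : max ε⁻¹ 1 = ε⁻¹ := max_eq_left h1
    have hGval : G ε⁻¹ = r ε := by
      simp only [hG, hmax, one_div, inv_inv]
    have := herr ε⁻¹ h1
    rw [hGval] at this
    calc |h ε⁻¹ - r ε| ≤ Real.exp (-ε⁻¹) := this
      _ = Real.exp (-1 / ε) := by rw [neg_div, one_div]
end
end

section
/- Let a, b : (0,1] → ℝ be continuous moderate nets with a(ε) + b(ε) = 1 for all ε. Then there exist continuous moderate nets r, s : (0,1] → ℝ such that (1 + a(ε)·r(ε))·(1 + b(ε)·s(ε)) = 0 for all ε ∈ (0,1]. -/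
open Set

noncomputable section

def Moderate (f : ℝ → ℝ) : Prop :=
  ∃ N : ℕ, ∃ ε₀ > (0:ℝ), ∀ ε ∈ Ioc01, ε < ε₀ → |f ε| ≤ ε⁻¹ ^ N

def myChi (x : ℝ) : ℝ := min 1 (max 0 (4 * |x| - 1))

def myF (x : ℝ) : ℝ := -(myChi x) * (x / max (1/16) (x ^ 2))

lemma myF_cont : Continuous myF := by
  apply Continuous.mul
  · exact (continuous_const.min ((continuous_const.max
      (((continuous_const.mul continuous_abs)).sub continuous_const)))).neg
  · apply Continuous.div continuous_id
    · exact continuous_const.max (continuous_pow 2)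
    · intro x
      have : (0:ℝ) < max (1/16) (x ^ 2) := lt_max_of_lt_left (by norm_num)
      linarith

lemma myF_key (x : ℝ) : 1 + x * myF x = 1 - myChi x := by
  rcases le_or_gt (|x|) (1/4) with h | h
  · have h1 : max (0:ℝ) (4 * |x| - 1) = 0 := max_eq_left (by linarith)
    have : myChi x = 0 := by simp [myChi, h1]
    simp [myF, this]
  · have hx2 : (1:ℝ)/16 < x ^ 2 := by
      have := abs_nonneg x
      nlinarith [sq_abs x]
    have hmax : max ((1:ℝ)/16) (x ^ 2) = x ^ 2 := max_eq_right hx2.le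
    have hx0 : x ≠ 0 := by
      intro h0; rw [h0] at h; simp at h; linarith
    rw [myF, hmax]
    field_simp
    ring

lemma myF_bound (x : ℝ) : |myF x| ≤ 4 := by
  have hchi0 : 0 ≤ myChi x := le_min (by norm_num) (le_max_left _ _)
  have hchi1 : myChi x ≤ 1 := min_le_left _ _
  have hpos : (0:ℝ) < max (1/16) (x ^ 2) := lt_max_of_lt_left (by norm_num)
  have : |myF x| = myChi x * (|x| / max (1/16) (x ^ 2)) := by
    rw [myF, abs_mul, abs_neg, abs_div, abs_of_nonneg hchi0,
      abs_of_pos hpos]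
  rw [this]
  have hb : |x| / max (1/16) (x ^ 2) ≤ 4 := by
    rw [div_le_iff₀ hpos]
    rcases le_or_gt (|x|) (1/4) with h | h
    · have : (1:ℝ)/16 ≤ max (1/16) (x ^ 2) := le_max_left _ _
      nlinarith
    · have : x ^ 2 ≤ max ((1:ℝ)/16) (x ^ 2) := le_max_right _ _
      nlinarith [sq_abs x]
  calc myChi x * (|x| / max (1/16) (x ^ 2)) ≤ 1 * 4 := by
        apply mul_le_mul hchi1 hb (by positivity) (by norm_num)
    _ = 4 := by norm_num

lemma myF_mod (f : ℝ → ℝ) : Moderate (fun ε => myF (f ε)) := by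
  refine ⟨2, 1/2, by norm_num, fun ε hε hlt => ?_⟩
  have h0 : 0 < ε := hε.1
  have h2 : 2 < ε⁻¹ := by
    have : ε < 2⁻¹ := by linarith
    exact (lt_inv_comm₀ h0 (by norm_num)).mp this
  calc |myF (f ε)| ≤ 4 := myF_bound _
    _ ≤ ε⁻¹ ^ 2 := by nlinarith

/-- Gelfand ring property for continuously parametrized generalized numbers,
at the level of representatives. -/
theorem stmt4 (a b : ℝ → ℝ)
    (hac : ContinuousOn a Ioc01) (hbc : ContinuousOn b Ioc01)
    (ham : Moderate a) (hbm : Moderate b)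
    (hab : ∀ ε ∈ Ioc01, a ε + b ε = 1) :
    ∃ r s : ℝ → ℝ, ContinuousOn r Ioc01 ∧ ContinuousOn s Ioc01 ∧
      Moderate r ∧ Moderate s ∧
      ∀ ε ∈ Ioc01, (1 + a ε * r ε) * (1 + b ε * s ε) = 0 := by
  refine ⟨fun ε => myF (a ε), fun ε => myF (b ε),
    myF_cont.comp_continuousOn hac, myF_cont.comp_continuousOn hbc,
    myF_mod a, myF_mod b, fun ε hε => ?_⟩
  rw [myF_key, myF_key]
  have hsum := hab ε hε
  have habs : 1/2 ≤ |a ε| ∨ 1/2 ≤ |b ε| := by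
    by_contra h
    push_neg at h
    have := abs_add_le (a ε) (b ε)
    rw [hsum] at this
    simp at this
    linarith [h.1, h.2]
  rcases habs with h | h
  · have : myChi (a ε) = 1 := by
      apply min_eq_left
      have : (1:ℝ) ≤ 4 * |a ε| - 1 := by linarith
      exact le_max_of_le_right this
    rw [this]; ring
  · have : myChi (b ε) = 1 := by
      apply min_eq_left
      have : (1:ℝ) ≤ 4 * |b ε| - 1 := by linarith
      exact le_max_of_le_right this
    rw [this]; ring
end
end

section
/- Let u : (0,1] → ℝ be a continuous net, and suppose there exists a negligible continuous net n : (0,1] → ℝ such that u(ε)² = u(ε) + n(ε) for all ε. Then either the net (u(ε) - 1) is negligible or the net u is negligible. -/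
open Set

noncomputable section

def Negligible (f : ℝ → ℝ) : Prop :=
  ∀ m : ℕ, ∃ ε₀ > (0:ℝ), ∀ ε ∈ Ioc01, ε < ε₀ → |f ε| < ε ^ m

/-- There are no nontrivial idempotents among continuously parametrized
generalized numbers. -/
theorem stmt5 (u n : ℝ → ℝ)
    (huc : ContinuousOn u Ioc01) (hnc : ContinuousOn n Ioc01)
    (hneg : Negligible n)
    (hidem : ∀ ε ∈ Ioc01, u ε ^ 2 = u ε + n ε) :
    Negligible (fun ε => u ε - 1) ∨ Negligible u := by
  obtain ⟨ε₀, hε₀, hn1⟩ := hneg 1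
  set δ := min ε₀ (1/16) with hδ
  have hδpos : 0 < δ := lt_min hε₀ (by norm_num)
  have hmem : ∀ ε ∈ Ioo (0:ℝ) δ, ε ∈ Ioc01 := by
    intro ε hε
    refine ⟨hε.1, ?_⟩
    have : ε < (1/16:ℝ) := lt_of_lt_of_le hε.2 (min_le_right _ _)
    linarith
  have hne : ∀ ε ∈ Ioo (0:ℝ) δ, u ε ≠ 1/2 := by
    intro ε hε h
    have hε' := hmem ε hε
    have hn := hn1 ε hε' (lt_of_lt_of_le hε.2 (min_le_left _ _))
    have hid := hidem ε hε'
    rw [h] at hid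
    have hnval : n ε = -(1/4) := by nlinarith
    rw [hnval] at hn
    have hεs : ε < (1/16:ℝ) := lt_of_lt_of_le hε.2 (min_le_right _ _)
    rw [pow_one] at hn
    rw [abs_of_neg (by norm_num : (-(1/4):ℝ) < 0)] at hn
    linarith
  have key : ∀ a ∈ Ioo (0:ℝ) δ, ∀ b ∈ Ioo (0:ℝ) δ,
      u a < 1/2 → 1/2 < u b → False := by
    intro a ha b hb hua hub
    have hsub : uIcc a b ⊆ Ioo (0:ℝ) δ := by
      intro x hx
      rw [mem_uIcc] at hx
      rcases hx with ⟨h1, h2⟩ | ⟨h1, h2⟩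
      · exact ⟨lt_of_lt_of_le ha.1 h1, lt_of_le_of_lt h2 hb.2⟩
      · exact ⟨lt_of_lt_of_le hb.1 h1, lt_of_le_of_lt h2 ha.2⟩
    have hc : ContinuousOn u (uIcc a b) := huc.mono (fun x hx => hmem x (hsub hx))
    have hmemv : (1/2:ℝ) ∈ uIcc (u a) (u b) := by
      rw [mem_uIcc]
      left
      exact ⟨le_of_lt hua, le_of_lt hub⟩
    obtain ⟨c, hc1, hc2⟩ := intermediate_value_uIcc hc hmemv
    exact hne c (hsub hc1) hc2
  by_cases hcase : ∀ ε ∈ Ioo (0:ℝ) δ, u ε < 1/2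
  · -- u is negligible
    right
    intro m
    obtain ⟨ε₁, hε₁, hnm⟩ := hneg (m+1)
    refine ⟨min δ (min ε₁ (1/2)), by positivity, ?_⟩
    intro ε hε hεlt
    have hεδ : ε ∈ Ioo (0:ℝ) δ := ⟨hε.1, lt_of_lt_of_le hεlt (min_le_left _ _)⟩
    have hεε₁ : ε < ε₁ := lt_of_lt_of_le hεlt (le_trans (min_le_right _ _) (min_le_left _ _))
    have hεhalf : ε < 1/2 := lt_of_lt_of_le hεlt (le_trans (min_le_right _ _) (min_le_right _ _))
    have hn := hnm ε hε hεε₁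
    have hu := hcase ε hεδ
    have hid : u ε * (u ε - 1) = n ε := by
      have h := hidem ε hε
      linear_combination h
    have habs : |u ε| * |u ε - 1| = |n ε| := by rw [← abs_mul, hid]
    have h1 : |u ε - 1| = 1 - u ε := by
      rw [abs_of_neg (by linarith)]; ring
    have h2 : (1/2:ℝ) ≤ |u ε - 1| := by rw [h1]; linarith
    have h3 : |u ε| ≤ 2 * |n ε| := by
      nlinarith [abs_nonneg (u ε), abs_nonneg (n ε)]
    have h4 : ε ^ (m+1) = ε * ε ^ m := by ring
    have h5 : (0:ℝ) < ε ^ m := pow_pos hε.1 m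
    calc |u ε| ≤ 2 * |n ε| := h3
      _ < 2 * ε ^ (m+1) := by linarith
      _ = 2 * ε * ε ^ m := by rw [h4]; ring
      _ < ε ^ m := by nlinarith
  · -- u - 1 is negligible
    left
    push_neg at hcase
    obtain ⟨b, hb, hub⟩ := hcase
    have hub' : 1/2 < u b := lt_of_le_of_ne hub (fun h => hne b hb h.symm)
    have hall : ∀ ε ∈ Ioo (0:ℝ) δ, 1/2 < u ε := by
      intro ε hε
      by_contra h
      push_neg at h
      have h' : u ε < 1/2 := lt_of_le_of_ne h (hne ε hε)
      exact key ε hε b hb h' hub'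
    intro m
    obtain ⟨ε₁, hε₁, hnm⟩ := hneg (m+1)
    refine ⟨min δ (min ε₁ (1/2)), by positivity, ?_⟩
    intro ε hε hεlt
    have hεδ : ε ∈ Ioo (0:ℝ) δ := ⟨hε.1, lt_of_lt_of_le hεlt (min_le_left _ _)⟩
    have hεε₁ : ε < ε₁ := lt_of_lt_of_le hεlt (le_trans (min_le_right _ _) (min_le_left _ _))
    have hεhalf : ε < 1/2 := lt_of_lt_of_le hεlt (le_trans (min_le_right _ _) (min_le_right _ _))
    have hn := hnm ε hε hεε₁
    have hu := hall ε hεδ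
    have hid : u ε * (u ε - 1) = n ε := by
      have h := hidem ε hε
      linear_combination h
    have habs : |u ε| * |u ε - 1| = |n ε| := by rw [← abs_mul, hid]
    have h1 : |u ε| = u ε := abs_of_pos (by linarith)
    have h2 : (1/2:ℝ) ≤ |u ε| := by rw [h1]; linarith
    have h3 : |u ε - 1| ≤ 2 * |n ε| := by
      nlinarith [abs_nonneg (u ε - 1), abs_nonneg (n ε)]
    have h4 : ε ^ (m+1) = ε * ε ^ m := by ring
    have h5 : (0:ℝ) < ε ^ m := pow_pos hε.1 m
    show |u ε - 1| < ε ^ m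
    calc |u ε - 1| ≤ 2 * |n ε| := h3
      _ < 2 * ε ^ (m+1) := by linarith
      _ = 2 * ε * ε ^ m := by rw [h4]; ring
      _ < ε ^ m := by nlinarith
end
end

section
/- There exists a continuous (indeed smooth) moderate net r : (0,1] → ℝ, namely r(ε) = sin(1/ε), such that none of the three nets r, r - 1, r + 1 is strictly nonzero; consequently none of r, r-1, r+1 is invertible in the ring of generalized numbers, and since 0 and 1 are the only idempotents, this ring is not an exchange ring. -/
open Set

noncomputable section

def StrictlyNonzero (f : ℝ → ℝ) : Prop :=
  ∃ m : ℕ, ∃ ε₀ > (0:ℝ), ∀ ε ∈ Ioc01, ε < ε₀ → ε ^ m ≤ |f ε|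

lemma aux_not_sn (f : ℝ → ℝ)
    (h : ∀ δ > (0:ℝ), ∃ ε, ε ∈ Ioc01 ∧ ε < δ ∧ f ε = 0) :
    ¬ StrictlyNonzero f := by
  rintro ⟨m, ε₀, hε₀, H⟩
  obtain ⟨ε, hmem, hlt, hz⟩ := h ε₀ hε₀
  have h1 := H ε hmem hlt
  rw [hz, abs_zero] at h1
  exact absurd h1 (not_le.mpr (pow_pos hmem.1 m))

lemma aux_mem {a δ : ℝ} (hδ : 0 < δ) (ha : max δ⁻¹ 1 < a) :
    a⁻¹ ∈ Ioc01 ∧ a⁻¹ < δ := by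
  have h1 : (1:ℝ) < a := lt_of_le_of_lt (le_max_right _ _) ha
  have ha0 : 0 < a := lt_trans one_pos h1
  refine ⟨⟨inv_pos.mpr ha0, ?_⟩, ?_⟩
  · exact inv_le_one_of_one_le₀ h1.le
  · have : δ⁻¹ < a := lt_of_le_of_lt (le_max_left _ _) ha
    calc a⁻¹ < δ⁻¹⁻¹ := by
          exact inv_strictAnti₀ (inv_pos.mpr hδ) this
      _ = δ := inv_inv δ

/-- The smooth moderate net ε ↦ sin(1/ε) is such that none of r, r - 1, r + 1 is
strictly nonzero (hence none is invertible, and the ring of smoothly parametrized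
generalized numbers is not an exchange ring). -/
theorem stmt6 :
    ∃ r : ℝ → ℝ, (∀ ε : ℝ, r ε = Real.sin ε⁻¹) ∧
      ContDiffOn ℝ (⊤ : ℕ∞) r Ioc01 ∧ ContinuousOn r Ioc01 ∧ Moderate r ∧
      ¬ StrictlyNonzero r ∧
      ¬ StrictlyNonzero (fun ε => r ε - 1) ∧
      ¬ StrictlyNonzero (fun ε => r ε + 1) := by
  refine ⟨fun ε => Real.sin ε⁻¹, fun _ => rfl, ?_, ?_, ?_, ?_, ?_, ?_⟩
  · -- smooth
    refine Real.contDiff_sin.comp_contDiffOn ?_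
    exact contDiffOn_inv ℝ |>.mono (fun x hx => ne_of_gt hx.1)
  · refine Real.continuous_sin.comp_continuousOn ?_
    exact continuousOn_inv₀.mono (fun x hx => ne_of_gt hx.1)
  · exact ⟨0, 1, one_pos, fun ε _ _ => by simpa using Real.abs_sin_le_one _⟩
  · refine aux_not_sn _ (fun δ hδ => ?_)
    obtain ⟨n, hn⟩ := exists_nat_gt (max δ⁻¹ 1)
    set a : ℝ := (n:ℝ) * Real.pi with hadef
    have ha : max δ⁻¹ 1 < a := by
      have hp := Real.pi_gt_three
      have h0 : (0:ℝ) ≤ n := n.cast_nonneg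
      calc max δ⁻¹ 1 < n := hn
        _ ≤ (n:ℝ) * Real.pi := by nlinarith
    obtain ⟨hmem, hlt⟩ := aux_mem hδ ha
    exact ⟨a⁻¹, hmem, hlt, by rw [inv_inv]; exact Real.sin_nat_mul_pi n⟩
  · refine aux_not_sn _ (fun δ hδ => ?_)
    obtain ⟨n, hn⟩ := exists_nat_gt (max δ⁻¹ 1)
    set a : ℝ := Real.pi / 2 + n * (2 * Real.pi) with hadef
    have ha : max δ⁻¹ 1 < a := by
      have h1 : (n:ℝ) ≤ n * (2 * Real.pi) := by
        nlinarith [Real.pi_gt_three, (n.cast_nonneg : (0:ℝ) ≤ n)]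
      have h2 : (0:ℝ) < Real.pi / 2 := by positivity
      calc max δ⁻¹ 1 < n := hn
        _ ≤ n * (2*Real.pi) := h1
        _ < a := by rw [hadef]; linarith
    obtain ⟨hmem, hlt⟩ := aux_mem hδ ha
    refine ⟨a⁻¹, hmem, hlt, ?_⟩
    simp only [inv_inv, hadef, Real.sin_add_nat_mul_two_pi, Real.sin_pi_div_two, sub_self]
  · refine aux_not_sn _ (fun δ hδ => ?_)
    obtain ⟨n, hn⟩ := exists_nat_gt (max δ⁻¹ 1)
    set a : ℝ := -(Real.pi / 2) + ((n+1 : ℕ) : ℝ) * (2 * Real.pi) with hadef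
    have ha : max δ⁻¹ 1 < a := by
      have := Real.pi_gt_three
      have h0 : (0:ℝ) ≤ n := n.cast_nonneg
      calc max δ⁻¹ 1 < n := hn
        _ < a := by rw [hadef]; push_cast; nlinarith
    obtain ⟨hmem, hlt⟩ := aux_mem hδ ha
    refine ⟨a⁻¹, hmem, hlt, ?_⟩
    have hsa : Real.sin a = -1 := by
      rw [hadef, Real.sin_add_nat_mul_two_pi, Real.sin_neg, Real.sin_pi_div_two]
    show Real.sin a⁻¹⁻¹ + 1 = 0
    rw [inv_inv, hsa]; ring
end
end

section
/- Let x : (0,1] → ℂ be a continuous moderate net. Then there exists a continuous net a : (0,1] → ℂ with |a(ε)| ≤ 2 for all ε, such that the net (a(ε)·x(ε) - |x(ε)|) is negligible. -/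
open Set

noncomputable section

/-- For every continuous moderate complex net x there is a continuous net a, bounded
by 2, with a·x - |x| negligible. -/
theorem stmt9 (x : ℝ → ℂ) (hxc : ContinuousOn x Ioc01)
    (hxm : ∃ N : ℕ, ∃ ε₀ > (0:ℝ), ∀ ε ∈ Ioc01, ε < ε₀ → ‖x ε‖ ≤ ε⁻¹ ^ N) :
    ∃ a : ℝ → ℂ, ContinuousOn a Ioc01 ∧
      (∀ ε ∈ Ioc01, ‖a ε‖ ≤ 2) ∧
      ∀ m : ℕ, ∃ ε₀ > (0:ℝ), ∀ ε ∈ Ioc01, ε < ε₀ →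
        ‖a ε * x ε - (‖x ε‖ : ℂ)‖ < ε ^ m := by
  classical
  set M : ℝ → ℝ := fun ε => max (‖x ε‖) (Real.exp (-ε⁻¹)) with hM
  have hMpos : ∀ ε : ℝ, 0 < M ε := fun ε =>
    lt_of_lt_of_le (Real.exp_pos _) (le_max_right _ _)
  refine ⟨fun ε => (starRingEnd ℂ) (x ε) / ((M ε : ℝ) : ℂ), ?_, ?_, ?_⟩
  · apply ContinuousOn.div
    · exact Complex.continuous_conj.comp_continuousOn hxc
    · have h1 : ContinuousOn (fun ε : ℝ => ‖x ε‖) Ioc01 :=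
        continuous_norm.comp_continuousOn hxc
      have h2 : ContinuousOn (fun ε : ℝ => Real.exp (-ε⁻¹)) Ioc01 :=
        Real.continuous_exp.comp_continuousOn
          (ContinuousOn.neg
            (ContinuousOn.inv₀ continuousOn_id (fun ε hε => ne_of_gt hε.1)))
      exact Complex.continuous_ofReal.comp_continuousOn (h1.sup h2)
    · intro ε hε
      simpa using (hMpos ε).ne'
  · intro ε hε
    have h1 : ‖(starRingEnd ℂ) (x ε) / ((M ε : ℝ) : ℂ)‖
        = ‖x ε‖ / M ε := by
      rw [norm_div, Complex.norm_conj, Complex.norm_real, Real.norm_eq_abs, abs_of_pos (hMpos ε)]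
    rw [h1]
    have : ‖x ε‖ / M ε ≤ 1 :=
      div_le_one_of_le₀ (le_max_left _ _) (hMpos ε).le
    linarith
  · intro m
    refine ⟨min 1 (((Nat.factorial (m+1)) : ℝ) + 1)⁻¹, by positivity, ?_⟩
    intro ε hε hεs
    have hε0 : 0 < ε := hε.1
    set r : ℝ := ‖x ε‖ with hr
    have hr0 : 0 ≤ r := norm_nonneg _
    have hrM : r ≤ M ε := le_max_left _ _
    -- key identity
    have hid : (starRingEnd ℂ) (x ε) / ((M ε : ℝ) : ℂ) * x ε - (r : ℂ)
        = ((r ^ 2 / M ε - r : ℝ) : ℂ) := by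
      have hconj : (starRingEnd ℂ) (x ε) * x ε = ((r ^ 2 : ℝ) : ℂ) := by
        rw [Complex.conj_mul']
        push_cast
        simp [hr]
      rw [div_mul_eq_mul_div, hconj]
      push_cast
      field_simp
    rw [hid, Complex.norm_real, Real.norm_eq_abs]
    -- bound the real quantity by exp(-1/ε)
    have hle : |r ^ 2 / M ε - r| ≤ Real.exp (-ε⁻¹) := by
      have h2 : r ^ 2 / M ε ≤ r := by
        rw [div_le_iff₀ (hMpos ε)]
        nlinarith
      rw [abs_of_nonpos (by linarith)]
      have hMle : M ε ≤ r + Real.exp (-ε⁻¹) :=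
        max_le (le_add_of_nonneg_right (Real.exp_pos _).le)
          (le_add_of_nonneg_left hr0)
      have h3 : r - r ^ 2 / M ε ≤ M ε - r := by
        rw [sub_le_sub_iff, ← sub_nonneg]
        have heq : M ε + r ^ 2 / M ε - (r + r) = (M ε - r) ^ 2 / M ε := by
          field_simp [(hMpos ε).ne']
          ring
        rw [heq]
        positivity
      linarith
    -- exp(-1/ε) ≤ (Nat.factorial (m+1)) ε^(m+1) < ε^m
    have hexp : Real.exp (-ε⁻¹) ≤ ((Nat.factorial (m+1)) : ℝ) * ε ^ (m+1) := by
      have h4 : (ε⁻¹) ^ (m+1) / ((Nat.factorial (m+1)) : ℝ) ≤ Real.exp (ε⁻¹) :=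
        Real.pow_div_factorial_le_exp _ (by positivity) _
      rw [Real.exp_neg]
      rw [div_le_iff₀ (by positivity)] at h4
      rw [inv_le_iff_one_le_mul₀ (Real.exp_pos _)]
      calc (1:ℝ) = (ε⁻¹)^(m+1) * ε^(m+1) := by
            rw [← mul_pow, inv_mul_cancel₀ hε0.ne', one_pow]
        _ ≤ Real.exp ε⁻¹ * ((Nat.factorial (m+1)):ℝ) * ε^(m+1) := by
            apply mul_le_mul_of_nonneg_right h4 (by positivity)
        _ = ((Nat.factorial (m+1)):ℝ) * ε^(m+1) * Real.exp ε⁻¹ := by ring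
    have hfact : ((Nat.factorial (m+1)) : ℝ) * ε ^ (m+1) < ε ^ m := by
      have hεlt : ε < (((Nat.factorial (m+1)) : ℝ) + 1)⁻¹ := lt_of_lt_of_le hεs (min_le_right _ _)
      have hfp : (0:ℝ) < ((Nat.factorial (m+1)) : ℝ) + 1 := by positivity
      have : ε * (((Nat.factorial (m+1)) : ℝ) + 1) < 1 :=
        calc ε * (((Nat.factorial (m+1)) : ℝ) + 1)
            < (((Nat.factorial (m+1)) : ℝ) + 1)⁻¹ * (((Nat.factorial (m+1)) : ℝ) + 1) :=
              mul_lt_mul_of_pos_right hεlt hfp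
          _ = 1 := inv_mul_cancel₀ hfp.ne'
      have hεm : (0:ℝ) < ε ^ m := by positivity
      calc ((Nat.factorial (m+1)) : ℝ) * ε ^ (m+1) = (((Nat.factorial (m+1)) : ℝ) * ε) * ε ^ m := by ring
        _ < 1 * ε ^ m := by
            apply mul_lt_mul_of_pos_right _ hεm
            nlinarith [hε0]
        _ = ε ^ m := one_mul _
    linarith
end
end

section
/- For continuous moderate nets r, s : (0,1] → ℝ, the pointwise minimum and maximum nets min(r,s) and max(r,s) are continuous and moderate, and if r' , s' are other representatives (r - r' and s - s' negligible) then min(r,s) - min(r',s') and max(r,s) - max(r',s') are negligible. Hence min and max are well-defined operations on the ring of continuously parametrized generalized numbers, making it a lattice-ordered ring. -/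
open Set

noncomputable section

lemma moderate_minmax (r s : ℝ → ℝ) (hrm : Moderate r) (hsm : Moderate s)
    (f : ℝ → ℝ) (hf : ∀ ε, |f ε| ≤ max |r ε| |s ε|) : Moderate f := by
  obtain ⟨N₁, ε₁, hε₁, h₁⟩ := hrm
  obtain ⟨N₂, ε₂, hε₂, h₂⟩ := hsm
  refine ⟨max N₁ N₂, min ε₁ ε₂, lt_min hε₁ hε₂, fun ε hε hlt => ?_⟩
  have hεpos : 0 < ε := hε.1
  have h1inv : 1 ≤ ε⁻¹ := (one_le_inv₀ hεpos).mpr hε.2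
  have b1 : |r ε| ≤ ε⁻¹ ^ max N₁ N₂ :=
    (h₁ ε hε (hlt.trans_le (min_le_left _ _))).trans
      (pow_le_pow_right₀ h1inv (le_max_left _ _))
  have b2 : |s ε| ≤ ε⁻¹ ^ max N₁ N₂ :=
    (h₂ ε hε (hlt.trans_le (min_le_right _ _))).trans
      (pow_le_pow_right₀ h1inv (le_max_right _ _))
  exact (hf ε).trans (max_le b1 b2)

lemma negligible_minmax (r s r' s' : ℝ → ℝ)
    (hrr' : Negligible (fun ε => r ε - r' ε))
    (hss' : Negligible (fun ε => s ε - s' ε))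
    (f : ℝ → ℝ) (hf : ∀ ε, |f ε| ≤ max |r ε - r' ε| |s ε - s' ε|) : Negligible f := by
  intro m
  obtain ⟨ε₁, hε₁, h₁⟩ := hrr' m
  obtain ⟨ε₂, hε₂, h₂⟩ := hss' m
  refine ⟨min ε₁ ε₂, lt_min hε₁ hε₂, fun ε hε hlt => ?_⟩
  exact (hf ε).trans_lt (max_lt (h₁ ε hε (hlt.trans_le (min_le_left _ _)))
    (h₂ ε hε (hlt.trans_le (min_le_right _ _))))

/-- Pointwise min and max of continuous moderate nets are continuous and moderate, and
are well defined modulo negligible nets; hence min and max are well-defined operations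
on the ring of continuously parametrized generalized numbers. -/
theorem stmt13 (r s r' s' : ℝ → ℝ)
    (hrc : ContinuousOn r Ioc01) (hsc : ContinuousOn s Ioc01)
    (hrm : Moderate r) (hsm : Moderate s)
    (hr'c : ContinuousOn r' Ioc01) (hs'c : ContinuousOn s' Ioc01)
    (hr'm : Moderate r') (hs'm : Moderate s')
    (hrr' : Negligible (fun ε => r ε - r' ε))
    (hss' : Negligible (fun ε => s ε - s' ε)) :
    ContinuousOn (fun ε => min (r ε) (s ε)) Ioc01 ∧
    ContinuousOn (fun ε => max (r ε) (s ε)) Ioc01 ∧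
    Moderate (fun ε => min (r ε) (s ε)) ∧
    Moderate (fun ε => max (r ε) (s ε)) ∧
    Negligible (fun ε => min (r ε) (s ε) - min (r' ε) (s' ε)) ∧
    Negligible (fun ε => max (r ε) (s ε) - max (r' ε) (s' ε)) := by
  refine ⟨ContinuousOn.inf hrc hsc, ContinuousOn.sup hrc hsc, ?_, ?_, ?_, ?_⟩
  · exact moderate_minmax r s hrm hsm _ fun ε => abs_min_le_max_abs_abs
  · exact moderate_minmax r s hrm hsm _ fun ε => abs_max_le_max_abs_abs
  · exact negligible_minmax r s r' s' hrr' hss' _ fun ε => abs_min_sub_min_le_max _ _ _ _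
  · exact negligible_minmax r s r' s' hrr' hss' _ fun ε => abs_max_sub_max_le_max _ _ _ _
end
end

section
/- Let r : (0,1] → ℝ be a continuous moderate net. Then [r] is invertible in the quotient ring of continuous moderate nets modulo negligible nets if and only if r is strictly nonzero, i.e., there exist m ∈ ℕ and ε₀ > 0 such that |r(ε)| ≥ ε^m for all ε < ε₀. -/
open Set

noncomputable section

/-- A continuous moderate net represents an invertible generalized number (i.e. has a
continuous moderate inverse modulo negligible nets) iff it is strictly nonzero. -/
theorem stmt14 (r : ℝ → ℝ) (hrc : ContinuousOn r Ioc01) (hrm : Moderate r) :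
    (∃ s : ℝ → ℝ, ContinuousOn s Ioc01 ∧ Moderate s ∧
      Negligible (fun ε => r ε * s ε - 1)) ↔
    (∃ m : ℕ, ∃ ε₀ > (0:ℝ), ∀ ε ∈ Ioc01, ε < ε₀ → ε ^ m ≤ |r ε|) := by
  constructor
  · rintro ⟨s, hsc, ⟨N, ε₁, hε₁, hs⟩, hneg⟩
    obtain ⟨ε₂, hε₂, hn⟩ := hneg 1
    refine ⟨N + 1, min (min ε₁ ε₂) (1/2), by positivity, ?_⟩
    intro ε hε hlt
    have hε0 : 0 < ε := hε.1
    have hεle : ε ≤ 1/2 := le_of_lt (lt_of_lt_of_le hlt (min_le_right _ _))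
    have h1 : |r ε * s ε - 1| < ε ^ 1 :=
      hn ε hε (lt_of_lt_of_le hlt ((min_le_left _ _).trans (min_le_right _ _)))
    have hs1 : |s ε| ≤ ε⁻¹ ^ N :=
      hs ε hε (lt_of_lt_of_le hlt ((min_le_left _ _).trans (min_le_left _ _)))
    have h2 : 1 - ε ≤ |r ε| * |s ε| := by
      have := abs_sub_abs_le_abs_sub (1 : ℝ) (r ε * s ε)
      rw [abs_sub_comm] at this
      rw [← abs_mul]
      simp only [abs_one] at this
      nlinarith [h1, this]
    have h3 : |r ε| * |s ε| ≤ |r ε| * ε⁻¹ ^ N :=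
      mul_le_mul_of_nonneg_left hs1 (abs_nonneg _)
    have h4 : (1 - ε) * ε ^ N ≤ |r ε| := by
      have h5 : (1 - ε) * ε ^ N ≤ (|r ε| * ε⁻¹ ^ N) * ε ^ N :=
        mul_le_mul_of_nonneg_right (h2.trans h3) (by positivity)
      have h6 : (|r ε| * ε⁻¹ ^ N) * ε ^ N = |r ε| := by
        rw [mul_assoc, ← mul_pow, inv_mul_cancel₀ hε0.ne', one_pow, mul_one]
      linarith [h5, h6.symm.le]
    calc ε ^ (N + 1) = ε ^ N * ε := pow_succ ε N
    _ ≤ ε ^ N * (1 - ε) := mul_le_mul_of_nonneg_left (by linarith) (by positivity)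
    _ = (1 - ε) * ε ^ N := mul_comm _ _
    _ ≤ |r ε| := h4
  · rintro ⟨m, ε₀, hε₀, hr⟩
    obtain ⟨N, ε₁, hε₁, hN⟩ := hrm
    have hden : ∀ ε ∈ Ioc01, (0:ℝ) < max ((r ε) ^ 2) (ε ^ (2 * m)) :=
      fun ε hε => lt_of_lt_of_le (pow_pos hε.1 _) (le_max_right _ _)
    refine ⟨fun ε => r ε / max ((r ε) ^ 2) (ε ^ (2 * m)), ?_, ?_, ?_⟩
    · refine ContinuousOn.div hrc ?_ (fun ε hε => ne_of_gt (hden ε hε))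
      exact fun x hx => ((hrc.pow 2) x hx).max ((continuousOn_id.pow (2*m)) x hx)
    · refine ⟨N + 2 * m, ε₁, hε₁, ?_⟩
      intro ε hε hlt
      have hε0 : 0 < ε := hε.1
      have hrb : |r ε| ≤ ε⁻¹ ^ N := hN ε hε hlt
      have hd := hden ε hε
      have hd2 : ε ^ (2 * m) ≤ max ((r ε) ^ 2) (ε ^ (2 * m)) := le_max_right _ _
      rw [abs_div, abs_of_pos hd]
      have : |r ε| / max ((r ε) ^ 2) (ε ^ (2 * m)) ≤ ε⁻¹ ^ N / ε ^ (2 * m) :=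
        div_le_div₀ (by positivity) hrb (pow_pos hε0 _) hd2
      refine this.trans_eq ?_
      rw [pow_add, div_eq_mul_inv, ← inv_pow]
    · intro k
      refine ⟨ε₀, hε₀, ?_⟩
      intro ε hε hlt
      have hε0 : 0 < ε := hε.1
      have hrε : ε ^ m ≤ |r ε| := hr ε hε hlt
      have hr0 : r ε ≠ 0 := by
        have : (0:ℝ) < |r ε| := lt_of_lt_of_le (pow_pos hε0 _) hrε
        exact abs_pos.mp this
      have hmax : max ((r ε) ^ 2) (ε ^ (2 * m)) = (r ε) ^ 2 := by
        apply max_eq_left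
        calc ε ^ (2 * m) = (ε ^ m) ^ 2 := by rw [← pow_mul, mul_comm]
        _ ≤ |r ε| ^ 2 := pow_le_pow_left₀ (by positivity) hrε 2
        _ = (r ε) ^ 2 := sq_abs _
      simp only [hmax]
      have : r ε * (r ε / (r ε) ^ 2) - 1 = 0 := by
        field_simp
        ring
      rw [this, abs_zero]
      exact pow_pos hε0 k
end
end

section
/- In the ring R of continuous moderate nets (0,1] → ℝ modulo negligible nets, for any elements r, s the following are equivalent: (i) r·s = 0; (ii) there exists x ∈ R with r·x = 0 and s·(1 - x) = 0; (iii) Ann(r) + Ann(s) = R, where Ann(a) = {b ∈ R : ab = 0}. -/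
open Set

noncomputable section

/-- A continuous moderate net (a representative of an element of the ring R of
continuous moderate nets modulo negligible nets). -/
def CM (f : ℝ → ℝ) : Prop := ContinuousOn f Ioc01 ∧ Moderate f

lemma neg_mono {f g : ℝ → ℝ} (h : ∀ ε ∈ Ioc01, |f ε| ≤ |g ε|)
    (hg : Negligible g) : Negligible f := by
  intro m
  obtain ⟨ε₀, hε₀, H⟩ := hg m
  exact ⟨ε₀, hε₀, fun ε hε hlt => lt_of_le_of_lt (h ε hε) (H ε hε hlt)⟩

lemma neg_zero' : Negligible (fun _ => (0:ℝ)) := by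
  intro m
  exact ⟨1, one_pos, fun ε hε _ => by simpa using pow_pos hε.1 m⟩

lemma negl_add {f g : ℝ → ℝ} (hf : Negligible f) (hg : Negligible g) :
    Negligible (fun ε => f ε + g ε) := by
  intro m
  obtain ⟨a, ha, Hf⟩ := hf (m + 1)
  obtain ⟨b, hb, Hg⟩ := hg (m + 1)
  refine ⟨min (min a b) (1 / 2), by positivity, fun ε hε hlt => ?_⟩
  have hεa : ε < a := hlt.trans_le ((min_le_left _ _).trans (min_le_left _ _))
  have hεb : ε < b := hlt.trans_le ((min_le_left _ _).trans (min_le_right _ _))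
  have hεh : ε < 1 / 2 := hlt.trans_le (min_le_right _ _)
  have hε0 : 0 < ε := hε.1
  calc |f ε + g ε| ≤ |f ε| + |g ε| := abs_add_le _ _
    _ < ε ^ (m + 1) + ε ^ (m + 1) := add_lt_add (Hf ε hε hεa) (Hg ε hε hεb)
    _ = 2 * ε * ε ^ m := by ring
    _ ≤ 1 * ε ^ m := by
        have := pow_nonneg hε0.le m
        nlinarith
    _ = ε ^ m := one_mul _

lemma mod_mul_neg {f g : ℝ → ℝ} (hf : Moderate f) (hg : Negligible g) :
    Negligible (fun ε => f ε * g ε) := by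
  obtain ⟨N, a, ha, Hf⟩ := hf
  intro m
  obtain ⟨b, hb, Hg⟩ := hg (m + N)
  refine ⟨min a b, lt_min ha hb, fun ε hε hlt => ?_⟩
  have hεa : ε < a := hlt.trans_le (min_le_left _ _)
  have hεb : ε < b := hlt.trans_le (min_le_right _ _)
  have hε0 : 0 < ε := hε.1
  have h1 : |f ε| ≤ ε⁻¹ ^ N := Hf ε hε hεa
  have h2 : |g ε| < ε ^ (m + N) := Hg ε hε hεb
  have hpos : (0:ℝ) < ε⁻¹ ^ N := pow_pos (inv_pos.2 hε0) N
  calc |f ε * g ε| = |f ε| * |g ε| := abs_mul _ _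
    _ ≤ ε⁻¹ ^ N * |g ε| := mul_le_mul_of_nonneg_right h1 (abs_nonneg _)
    _ < ε⁻¹ ^ N * ε ^ (m + N) := by exact mul_lt_mul_of_pos_left h2 hpos
    _ = ε ^ m := by
        rw [pow_add]
        field_simp
        rw [← mul_pow, one_div_mul_cancel hε0.ne', one_pow]

lemma mod_mul {f g : ℝ → ℝ} (hf : Moderate f) (hg : Moderate g) :
    Moderate (fun ε => f ε * g ε) := by
  obtain ⟨N, a, ha, Hf⟩ := hf
  obtain ⟨M, b, hb, Hg⟩ := hg
  refine ⟨N + M, min a b, lt_min ha hb, fun ε hε hlt => ?_⟩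
  have h1 : |f ε| ≤ ε⁻¹ ^ N := Hf ε hε (hlt.trans_le (min_le_left _ _))
  have h2 : |g ε| ≤ ε⁻¹ ^ M := Hg ε hε (hlt.trans_le (min_le_right _ _))
  calc |f ε * g ε| = |f ε| * |g ε| := abs_mul _ _
    _ ≤ ε⁻¹ ^ N * ε⁻¹ ^ M := mul_le_mul h1 h2 (abs_nonneg _) (pow_nonneg (inv_nonneg.2 hε.1.le) N)
    _ = ε⁻¹ ^ (N + M) := (pow_add _ _ _).symm

lemma CM_mul {f g : ℝ → ℝ} (hf : CM f) (hg : CM g) : CM (fun ε => f ε * g ε) :=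
  ⟨hf.1.mul hg.1, mod_mul hf.2 hg.2⟩

lemma mod_of_bounded {f : ℝ → ℝ} (h : ∀ ε ∈ Ioc01, |f ε| ≤ 1) : Moderate f :=
  ⟨0, 1, one_pos, fun ε hε _ => by simpa using h ε hε⟩

lemma CM_one : CM (fun _ => (1:ℝ)) :=
  ⟨continuousOn_const, mod_of_bounded fun ε _ => by norm_num⟩

lemma neg_sqrt {f : ℝ → ℝ} (hf : Negligible f) :
    Negligible (fun ε => Real.sqrt |f ε|) := by
  intro m
  obtain ⟨a, ha, H⟩ := hf (m * 2)
  refine ⟨a, ha, fun ε hε hlt => ?_⟩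
  have h1 : |f ε| < ε ^ (m * 2) := H ε hε hlt
  have h2 : Real.sqrt |f ε| < Real.sqrt (ε ^ (m * 2)) :=
    Real.sqrt_lt_sqrt (abs_nonneg _) h1
  rw [pow_mul, Real.sqrt_sq (pow_nonneg hε.1.le m)] at h2
  rwa [abs_of_nonneg (Real.sqrt_nonneg _)]

lemma neg_exp : Negligible (fun ε => Real.exp (-1 / ε)) := by
  intro m
  set n := m + 1 with hn
  refine ⟨min 1 (1 / (2 * (Nat.factorial n : ℝ))), by positivity, fun ε hε hlt => ?_⟩
  have hε0 : 0 < ε := hε.1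
  have hfac : (0:ℝ) < (Nat.factorial n : ℝ) := by positivity
  have hεsmall : ε < 1 / (2 * (Nat.factorial n : ℝ)) := hlt.trans_le (min_le_right _ _)
  have key : ((1/ε) ^ n / (Nat.factorial n : ℝ)) ≤ Real.exp (1 / ε) :=
    Real.pow_div_factorial_le_exp (x := 1/ε) (by positivity) n
  have hexp_pos : (0:ℝ) < Real.exp (1 / ε) := Real.exp_pos _
  have h2 : Real.exp (-1 / ε) = 1 / Real.exp (1 / ε) := by
    rw [neg_div, Real.exp_neg]
    exact (one_div _).symm
  have hpowpos : (0:ℝ) < (1/ε) ^ n := by positivity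
  have h3 : Real.exp (-1 / ε) ≤ (Nat.factorial n : ℝ) / (1/ε) ^ n := by
    rw [h2, div_le_div_iff₀ hexp_pos hpowpos, one_mul]
    have key2 : (1/ε) ^ n ≤ Real.exp (1/ε) * (Nat.factorial n : ℝ) := (div_le_iff₀ hfac).mp key
    nlinarith [key2]
  have h4 : (Nat.factorial n : ℝ) / (1/ε) ^ n = (Nat.factorial n : ℝ) * ε ^ n := by
    rw [one_div, inv_pow]
    field_simp
  have hhf : (Nat.factorial n : ℝ) * ε < 1 / 2 := by
    rw [lt_div_iff₀ (by positivity : (0:ℝ) < 2 * (Nat.factorial n : ℝ))] at hεsmall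
    nlinarith
  have h5 : (Nat.factorial n : ℝ) * ε ^ n < ε ^ m := by
    have hpw : ε ^ n = ε ^ m * ε := by rw [hn, pow_succ]
    have hm : (0:ℝ) < ε ^ m := pow_pos hε0 m
    rw [hpw]
    nlinarith [hm, hhf]
  calc |Real.exp (-1 / ε)| = Real.exp (-1 / ε) := abs_of_pos (Real.exp_pos _)
    _ ≤ (Nat.factorial n : ℝ) * ε ^ n := h4 ▸ h3
    _ < ε ^ m := h5

lemma bound_aux (a b e : ℝ) (he : 0 < e) :
    |a * (b ^ 2 / (a ^ 2 + b ^ 2 + |a * b| + e))| ≤ Real.sqrt |a * b| := by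
  set t := Real.sqrt |a * b| with hT
  have ht : 0 ≤ t := Real.sqrt_nonneg _
  have ht2 : t ^ 2 = |a * b| := Real.sq_sqrt (abs_nonneg _)
  have hab : |a * b| = |a| * |b| := abs_mul a b
  have hD : 0 < a ^ 2 + b ^ 2 + |a * b| + e := by positivity
  rw [abs_mul, abs_of_nonneg (div_nonneg (sq_nonneg _) hD.le), mul_div_assoc',
    div_le_iff₀ hD]
  nlinarith [mul_nonneg ht (sq_nonneg (|b| - t)), sq_abs b, sq_abs a,
    mul_nonneg (abs_nonneg a) (sq_nonneg b), mul_nonneg ht he.le,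
    mul_nonneg ht (sq_nonneg a), abs_nonneg a, abs_nonneg b]

lemma bound_aux2 (a b e : ℝ) (he : 0 < e) :
    |b * (1 - b ^ 2 / (a ^ 2 + b ^ 2 + |a * b| + e))| ≤
      (Real.sqrt |a * b| + Real.sqrt |a * b|) + Real.sqrt e := by
  set t := Real.sqrt |a * b| with hT
  set u := Real.sqrt e with hU
  have ht : 0 ≤ t := Real.sqrt_nonneg _
  have hu : 0 ≤ u := Real.sqrt_nonneg _
  have ht2 : t ^ 2 = |a * b| := Real.sq_sqrt (abs_nonneg _)
  have hu2 : u ^ 2 = e := Real.sq_sqrt he.le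
  have hD : 0 < a ^ 2 + b ^ 2 + |a * b| + e := by positivity
  have h1 : 1 - b ^ 2 / (a ^ 2 + b ^ 2 + |a * b| + e) =
      (a ^ 2 + |a * b| + e) / (a ^ 2 + b ^ 2 + |a * b| + e) := by
    field_simp
    ring
  have habs : (0:ℝ) ≤ a ^ 2 + |a * b| + e := by positivity
  rw [h1, abs_mul, abs_of_nonneg (div_nonneg habs hD.le), mul_div_assoc',
    div_le_iff₀ hD]
  have k1 : |b| * a ^ 2 ≤ t * (a ^ 2 + b ^ 2 + |a * b| + e) := by
    nlinarith [mul_nonneg ht (sq_nonneg (|a| - t)), sq_abs a, sq_abs b,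
      mul_nonneg (abs_nonneg b) (sq_nonneg a), mul_nonneg ht he.le,
      mul_nonneg ht (sq_nonneg b), abs_nonneg a, abs_nonneg b, abs_mul a b]
  have k2 : |b| * |a * b| ≤ t * (a ^ 2 + b ^ 2 + |a * b| + e) := by
    nlinarith [mul_nonneg ht (sq_nonneg (|b| - t)), sq_abs b,
      mul_nonneg ht he.le, mul_nonneg ht (sq_nonneg a), abs_nonneg a,
      abs_nonneg b, abs_mul a b, mul_nonneg (abs_nonneg b) (abs_nonneg (a*b))]
  have k3 : |b| * e ≤ u * (a ^ 2 + b ^ 2 + |a * b| + e) := by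
    nlinarith [mul_nonneg hu (sq_nonneg (|b| - u)), sq_abs b,
      mul_nonneg hu (sq_nonneg a), mul_nonneg hu (abs_nonneg (a * b)),
      abs_nonneg b]
  nlinarith [k1, k2, k3]

lemma key_lemma (r s : ℝ → ℝ) (hr : CM r) (hs : CM s)
    (h : Negligible fun ε => r ε * s ε) :
    ∃ x : ℝ → ℝ, CM x ∧ (Negligible fun ε => r ε * x ε) ∧
      (Negligible fun ε => s ε * (1 - x ε)) := by
  set D : ℝ → ℝ := fun ε => (r ε) ^ 2 + (s ε) ^ 2 + |r ε * s ε| + Real.exp (-1 / ε)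
    with hDdef
  set x : ℝ → ℝ := fun ε => (s ε) ^ 2 / D ε with hxdef
  have hDpos : ∀ ε ∈ Ioc01, 0 < D ε := by
    intro ε hε
    have := Real.exp_pos (-1 / ε)
    simp only [hDdef]
    positivity
  have hDcont : ContinuousOn D Ioc01 := by
    apply ContinuousOn.add
    apply ContinuousOn.add
    apply ContinuousOn.add
    · exact hr.1.pow 2
    · exact hs.1.pow 2
    · exact (hr.1.mul hs.1).abs
    · exact Real.continuous_exp.comp_continuousOn
        ((continuousOn_const.div continuousOn_id fun ε hε => ne_of_gt hε.1))
  have hxcont : ContinuousOn x Ioc01 :=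
    (hs.1.pow 2).div hDcont fun ε hε => (hDpos ε hε).ne'
  have hx01 : ∀ ε ∈ Ioc01, 0 ≤ x ε ∧ x ε ≤ 1 := by
    intro ε hε
    have hD := hDpos ε hε
    constructor
    · exact div_nonneg (sq_nonneg _) hD.le
    · rw [hxdef, div_le_one hD]
      have := Real.exp_pos (-1 / ε)
      have := abs_nonneg (r ε * s ε)
      simp only [hDdef]
      nlinarith [sq_nonneg (r ε)]
  have hxCM : CM x := by
    refine ⟨hxcont, mod_of_bounded fun ε hε => ?_⟩
    obtain ⟨h0, h1⟩ := hx01 ε hε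
    rw [abs_of_nonneg h0]
    exact h1
  refine ⟨x, hxCM, ?_, ?_⟩
  · -- r·x negligible
    apply neg_mono (g := fun ε => Real.sqrt |r ε * s ε|)
    · intro ε hε
      rw [abs_of_nonneg (Real.sqrt_nonneg _)]
      exact bound_aux (r ε) (s ε) (Real.exp (-1 / ε)) (Real.exp_pos _)
    · exact neg_sqrt h
  · -- s·(1-x) negligible
    apply neg_mono
      (g := fun ε => (Real.sqrt |r ε * s ε| + Real.sqrt |r ε * s ε|) +
        Real.sqrt |Real.exp (-1 / ε)|)
    · intro ε hε
      have hnn : (0:ℝ) ≤ (Real.sqrt |r ε * s ε| + Real.sqrt |r ε * s ε|) +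
          Real.sqrt |Real.exp (-1 / ε)| := by positivity
      rw [abs_of_nonneg hnn, abs_of_pos (Real.exp_pos (-1 / ε))]
      exact bound_aux2 (r ε) (s ε) (Real.exp (-1 / ε)) (Real.exp_pos _)
    · exact negl_add (negl_add (neg_sqrt h) (neg_sqrt h)) (neg_sqrt neg_exp)

/-- In the ring R of continuous moderate nets modulo negligible nets the following
are equivalent for elements r, s (phrased via representatives): (i) rs = 0;
(ii) there is x ∈ R with rx = 0 and s(1-x) = 0; (iii) Ann(r) + Ann(s) = R. -/
theorem stmt15 (r s : ℝ → ℝ) (hr : CM r) (hs : CM s) :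
    ((Negligible fun ε => r ε * s ε) ↔
      (∃ x : ℝ → ℝ, CM x ∧ (Negligible fun ε => r ε * x ε) ∧
        (Negligible fun ε => s ε * (1 - x ε)))) ∧
    ((Negligible fun ε => r ε * s ε) ↔
      (∀ t : ℝ → ℝ, CM t → ∃ a b : ℝ → ℝ, CM a ∧ CM b ∧
        (Negligible fun ε => r ε * a ε) ∧ (Negligible fun ε => s ε * b ε) ∧
        (Negligible fun ε => t ε - (a ε + b ε)))) := by
  constructor
  · constructor
    · exact key_lemma r s hr hs
    · rintro ⟨x, hx, hrx, hsx⟩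
      -- r s = s (r x) + r (s (1 - x))
      apply neg_mono (g := fun ε => s ε * (r ε * x ε) + r ε * (s ε * (1 - x ε)))
      · intro ε hε
        have : r ε * s ε = s ε * (r ε * x ε) + r ε * (s ε * (1 - x ε)) := by ring
        rw [this]
      · exact negl_add (mod_mul_neg hs.2 hrx) (mod_mul_neg hr.2 hsx)
  · constructor
    · intro h t ht
      obtain ⟨x, hx, hrx, hsx⟩ := key_lemma r s hr hs h
      refine ⟨fun ε => t ε * x ε, fun ε => t ε * (1 - x ε),
        CM_mul ht hx, ?_, ?_, ?_, ?_⟩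
      · refine ⟨ht.1.mul (continuousOn_const.sub hx.1), ?_⟩
        have hone : Moderate (fun ε => (1:ℝ) - x ε) := by
          obtain ⟨_, hxmod⟩ := hx
          obtain ⟨N, a, ha, H⟩ := hxmod
          refine ⟨N + 1, min a (1/2), lt_min ha (by norm_num), fun ε hε hlt => ?_⟩
          have h1 : |x ε| ≤ ε⁻¹ ^ N := H ε hε (hlt.trans_le (min_le_left _ _))
          have h2 : (1:ℝ) ≤ ε⁻¹ ^ N := one_le_pow₀ (one_le_inv_iff₀.2 ⟨hε.1, hε.2⟩)
          have hεh : ε < 1/2 := hlt.trans_le (min_le_right _ _)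
          have hinv2 : (2:ℝ) ≤ ε⁻¹ := by
            rw [le_inv_comm₀ two_pos hε.1]
            linarith
          have hp : (0:ℝ) < ε⁻¹ ^ N := pow_pos (inv_pos.2 hε.1) N
          calc |1 - x ε| ≤ |(1:ℝ)| + |x ε| := abs_sub _ _
            _ ≤ ε⁻¹ ^ N + ε⁻¹ ^ N := by rw [abs_one]; exact add_le_add h2 h1
            _ ≤ ε⁻¹ ^ (N + 1) := by
                rw [pow_succ]
                nlinarith
        exact mod_mul ht.2 hone
      · apply neg_mono (g := fun ε => t ε * (r ε * x ε))
        · intro ε hε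
          have : r ε * (t ε * x ε) = t ε * (r ε * x ε) := by ring
          rw [this]
        · exact mod_mul_neg ht.2 hrx
      · apply neg_mono (g := fun ε => t ε * (s ε * (1 - x ε)))
        · intro ε hε
          have : s ε * (t ε * (1 - x ε)) = t ε * (s ε * (1 - x ε)) := by ring
          rw [this]
        · exact mod_mul_neg ht.2 hsx
      · apply neg_mono (g := fun _ => (0:ℝ))
        · intro ε hε
          have : t ε - (t ε * x ε + t ε * (1 - x ε)) = 0 := by ring
          rw [this]
        · exact neg_zero'
    · intro H
      obtain ⟨a, b, ha, hb, hra, hsb, htab⟩ := H (fun _ => 1) CM_one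
      -- r s = s (r a) + r (s b) + (r s) (1 - (a + b))
      apply neg_mono (g := fun ε => (s ε * (r ε * a ε) + r ε * (s ε * b ε)) +
        (r ε * s ε) * (1 - (a ε + b ε)))
      · intro ε hε
        have : r ε * s ε = (s ε * (r ε * a ε) + r ε * (s ε * b ε)) +
            (r ε * s ε) * (1 - (a ε + b ε)) := by ring
        conv_lhs => rw [this]
      · refine negl_add (negl_add (mod_mul_neg hs.2 hra) (mod_mul_neg hr.2 hsb)) ?_
        exact mod_mul_neg (mod_mul hr.2 hs.2) htab
end
end

section
/- Let r, s : (0,1] → ℝ be continuous moderate nets and suppose that for all representatives the order relations hold: [r] ≤ [s] in the ring of continuously parametrized generalized numbers (i.e., there exist representatives r', s' with r - r', s - s' negligible and r'(ε) ≤ s'(ε) for all ε). Then for every a > 0 there exists ε₀ > 0 such that r(ε) ≤ s(ε) + ε^a for all ε < ε₀; conversely this condition implies [r] ≤ [s]. -/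
open Set

noncomputable section

/-- Characterization of the order on continuously parametrized generalized numbers:
[r] ≤ [s] (existence of pointwise ordered continuous representatives) iff for every
a > 0 one has r(ε) ≤ s(ε) + ε^a for all sufficiently small ε. -/
theorem stmt17 (r s : ℝ → ℝ)
    (hrc : ContinuousOn r Ioc01) (hsc : ContinuousOn s Ioc01)
    (hrm : Moderate r) (hsm : Moderate s) :
    (∃ r' s' : ℝ → ℝ, ContinuousOn r' Ioc01 ∧ ContinuousOn s' Ioc01 ∧
      Negligible (fun ε => r ε - r' ε) ∧ Negligible (fun ε => s ε - s' ε) ∧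
      ∀ ε ∈ Ioc01, r' ε ≤ s' ε) ↔
    (∀ a : ℝ, 0 < a → ∃ ε₀ > (0:ℝ), ∀ ε ∈ Ioc01, ε < ε₀ → r ε ≤ s ε + ε ^ a) := by
  constructor
  · rintro ⟨r', s', hr'c, hs'c, hnr, hns, hle⟩ a ha
    set m : ℕ := ⌈a⌉₊ + 1 with hm
    have hma : a < (m : ℝ) := lt_of_le_of_lt (Nat.le_ceil a) (by exact_mod_cast Nat.lt_succ_self _)
    obtain ⟨ε₁, hε₁, h1⟩ := hnr m
    obtain ⟨ε₂, hε₂, h2⟩ := hns m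
    set d : ℝ := (m : ℝ) - a with hd'
    have hd : 0 < d := sub_pos.2 hma
    set δ : ℝ := (1/2 : ℝ) ^ (1/d) with hδ'
    have hδ : 0 < δ := Real.rpow_pos_of_pos (by norm_num) _
    refine ⟨min ε₁ (min ε₂ δ), by positivity, ?_⟩
    intro ε hε hlt
    have hε0 : 0 < ε := hε.1
    have hb1 := h1 ε hε (lt_of_lt_of_le hlt (min_le_left _ _))
    have hb2 := h2 ε hε (hlt.trans_le ((min_le_right _ _).trans (min_le_left _ _)))
    have hεδ : ε < δ := hlt.trans_le ((min_le_right _ _).trans (min_le_right _ _))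
    have key : 2 * ε ^ (m : ℕ) ≤ ε ^ a := by
      have e1 : ε ^ (m : ℕ) = ε ^ a * ε ^ d := by
        rw [← Real.rpow_natCast ε m, ← Real.rpow_add hε0]
        norm_num [hd']
      have e2 : ε ^ d < 1/2 := by
        calc ε ^ d < δ ^ d := Real.rpow_lt_rpow hε0.le hεδ hd
          _ = 1/2 := by
            rw [hδ', ← Real.rpow_mul (by norm_num), one_div_mul_cancel hd.ne', Real.rpow_one]
      nlinarith [Real.rpow_pos_of_pos hε0 a]
    have hb1' := abs_lt.1 hb1
    have hb2' := abs_lt.1 hb2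
    have := hle ε hε
    simp only at hb1' hb2'
    linarith [hb1'.2, hb2'.1]
  · intro h
    refine ⟨fun ε => min (r ε) (s ε), s, fun x hx => (hrc x hx).min (hsc x hx), hsc, ?_, ?_,
      fun ε _ => min_le_right _ _⟩
    · intro m
      obtain ⟨ε₀, hε₀, hb⟩ := h ((m : ℝ) + 1) (by positivity)
      refine ⟨min ε₀ 1, by positivity, fun ε hε hlt => ?_⟩
      have hε0 : 0 < ε := hε.1
      have hε1 : ε < 1 := lt_of_lt_of_le hlt (min_le_right _ _)
      have hr := hb ε hε (hlt.trans_le (min_le_left _ _))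
      simp only
      rcases le_total (r ε) (s ε) with hc | hc
      · rw [min_eq_left hc, sub_self, abs_zero]
        positivity
      · rw [min_eq_right hc, abs_of_nonneg (by linarith)]
        have e1 : ε ^ ((m : ℝ) + 1) = ε ^ (m + 1 : ℕ) := by
          rw [← Real.rpow_natCast ε (m + 1)]; push_cast; ring_nf
        have e2 : ε ^ (m + 1 : ℕ) < ε ^ m :=
          pow_lt_pow_right_of_lt_one₀ hε0 hε1 (Nat.lt_succ_self m)
        linarith [hr, e1 ▸ hr]
    · intro m
      exact ⟨1, one_pos, fun ε hε _ => by
        simp only [sub_self, abs_zero]; exact pow_pos hε.1 m⟩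
end
end

section
/- Let J be an ideal in the ring R of continuous moderate nets (0,1] → ℝ modulo negligible nets, and let x ∈ J with x ≥ 0. Then for every n ≥ 1, if y ∈ R satisfies y^n ∈ J^n then the class of the net ε ↦ |y(ε)|^{1/n} is well-defined in R (continuous and moderate, independent of representative up to negligible nets). -/
open Set

noncomputable section

lemma rpow_sub_rpow_le' {x y : ℝ} (hy : 0 ≤ y) (hxy : y ≤ x) {p : ℝ} (hp : 0 ≤ p)
    (hp1 : p ≤ 1) : x ^ p - y ^ p ≤ (x - y) ^ p := by
  have hx : 0 ≤ x := hy.trans hxy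
  have hxy' : 0 ≤ x - y := by linarith
  have h := NNReal.rpow_add_le_add_rpow (x - y).toNNReal y.toNNReal hp hp1
  have hsum : (x - y).toNNReal + y.toNNReal = x.toNNReal := by
    rw [← Real.toNNReal_add hxy' hy, sub_add_cancel]
  rw [hsum] at h
  have h' : (x.toNNReal : ℝ) ^ p ≤ ((x - y).toNNReal : ℝ) ^ p + (y.toNNReal : ℝ) ^ p := by
    have := (NNReal.coe_le_coe).2 h
    simpa [NNReal.coe_rpow] using this
  rw [Real.coe_toNNReal x hx, Real.coe_toNNReal _ hxy', Real.coe_toNNReal y hy] at h'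
  linarith

lemma abs_rpow_sub_abs_rpow_le (a b : ℝ) {p : ℝ} (hp : 0 ≤ p) (hp1 : p ≤ 1) :
    |(|a|) ^ p - (|b|) ^ p| ≤ |a - b| ^ p := by
  wlog h : |b| ≤ |a| with H
  · have := H b a hp hp1 (le_of_not_ge h)
    rwa [abs_sub_comm b a, abs_sub_comm ((|b|) ^ p)] at this
  rw [abs_of_nonneg (sub_nonneg.2 (Real.rpow_le_rpow (abs_nonneg b) h hp))]
  calc |a| ^ p - |b| ^ p ≤ (|a| - |b|) ^ p := rpow_sub_rpow_le' (abs_nonneg b) h hp hp1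
    _ ≤ |a - b| ^ p :=
      Real.rpow_le_rpow (by linarith) (abs_sub_abs_le_abs_sub a b) hp

/-- n-th roots of absolute values are inner operations on the ring of continuous
moderate nets modulo negligible nets: ε ↦ |u(ε)|^{1/n} is continuous and moderate,
and is independent of the representative up to negligible nets. -/
theorem stmt18 (n : ℕ) (hn : 1 ≤ n) (u v : ℝ → ℝ)
    (huc : ContinuousOn u Ioc01) (hum : Moderate u)
    (hvc : ContinuousOn v Ioc01) (hvm : Moderate v) :
    ContinuousOn (fun ε => |u ε| ^ ((n : ℝ)⁻¹)) Ioc01 ∧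
    Moderate (fun ε => |u ε| ^ ((n : ℝ)⁻¹)) ∧
    (Negligible (fun ε => u ε - v ε) →
      Negligible (fun ε => |u ε| ^ ((n : ℝ)⁻¹) - |v ε| ^ ((n : ℝ)⁻¹))) := by
  have hn0 : (0:ℝ) < (n:ℝ) := by exact_mod_cast hn
  have hp0 : 0 < (n:ℝ)⁻¹ := inv_pos.2 hn0
  have hp1 : (n:ℝ)⁻¹ ≤ 1 := by
    rw [inv_le_one_iff₀]; right; exact_mod_cast hn
  refine ⟨?_, ?_, ?_⟩
  · exact huc.abs.rpow_const (fun x _ => Or.inr hp0.le)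
  · obtain ⟨N, ε₀, hε₀, hN⟩ := hum
    refine ⟨N, ε₀, hε₀, fun ε hε hεlt => ?_⟩
    have h1 : (1:ℝ) ≤ ε⁻¹ := (one_le_inv₀ hε.1).2 hε.2
    have h2 : (1:ℝ) ≤ ε⁻¹ ^ N := one_le_pow₀ h1
    have h3 : |u ε| ^ ((n:ℝ)⁻¹) ≤ (ε⁻¹ ^ N) ^ ((n:ℝ)⁻¹) :=
      Real.rpow_le_rpow (abs_nonneg _) (hN ε hε hεlt) hp0.le
    have h4 : (ε⁻¹ ^ N) ^ ((n:ℝ)⁻¹) ≤ (ε⁻¹ ^ N) ^ (1:ℝ) :=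
      Real.rpow_le_rpow_of_exponent_le h2 hp1
    rw [Real.rpow_one] at h4
    rw [abs_of_nonneg (Real.rpow_nonneg (abs_nonneg _) _)]
    exact h3.trans h4
  · intro hneg m
    obtain ⟨ε₀, hε₀, hm⟩ := hneg (m * n)
    refine ⟨ε₀, hε₀, fun ε hε hεlt => ?_⟩
    have hεpos : 0 < ε := hε.1
    have key := abs_rpow_sub_abs_rpow_le (u ε) (v ε) hp0.le hp1
    have hlt : |u ε - v ε| < ε ^ (m * n) := hm ε hε hεlt
    have h5 : |u ε - v ε| ^ ((n:ℝ)⁻¹) < (ε ^ (m * n)) ^ ((n:ℝ)⁻¹) :=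
      Real.rpow_lt_rpow (abs_nonneg _) hlt hp0
    have h6 : (ε ^ (m * n) : ℝ) ^ ((n:ℝ)⁻¹) = ε ^ m := by
      rw [pow_mul, ← Real.rpow_natCast (ε ^ m) n, ← Real.rpow_mul (by positivity),
        mul_inv_cancel₀ (by exact_mod_cast hn0.ne'), Real.rpow_one]
    calc |(|u ε| ^ ((n:ℝ)⁻¹) - |v ε| ^ ((n:ℝ)⁻¹))| ≤ |u ε - v ε| ^ ((n:ℝ)⁻¹) := key
      _ < ε ^ m := h6 ▸ h5
end
end
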